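/- arXiv:2004.07332 — 3 statements merged into one kernel-verified Lean document; each statement's English description precedes it below -/
import Mathlib

section
/- The function Ψ₀(t) = exp(−‖t‖²/2) on ℝ^d satisfies the partial differential equation Δf(t) − (‖t‖² − d)·f(t) = 0 with f(0) = 1, where Δ denotes the Laplace operator. Moreover, any smooth solution f : ℝ^d → ℝ of this PDE with f(0) = 1 that is bounded and tends to 0 at infinity equals Ψ₀. -/
/-- The Laplace operator `Δf(t) = ∑_{j=1}^d ∂²f/∂t_j²(t)` on `ℝ^d`. -/
noncomputable def laplacian {d : ℕ} (f : EuclideanSpace ℝ (Fin d) → ℝ)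
    (t : EuclideanSpace ℝ (Fin d)) : ℝ :=
  ∑ j, fderiv ℝ (fun s => fderiv ℝ f s (EuclideanSpace.single j 1)) t (EuclideanSpace.single j 1)

open scoped RealInnerProductSpace
noncomputable section

namespace StmtAux

variable {d : ℕ}

local notation "Ed" => EuclideanSpace ℝ (Fin d)

def gauss (a : ℝ) (p s : Ed) : ℝ := Real.exp (-a * ‖s - p‖ ^ 2)

lemma gauss_pos (a : ℝ) (p s : Ed) : 0 < gauss a p s := Real.exp_pos _

lemma hasFDerivAt_gauss (a : ℝ) (p t : Ed) :
    HasFDerivAt (gauss a p) ((-2 * a * gauss a p t) • innerSL ℝ (t - p)) t := by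
  have h1 : HasFDerivAt (fun s : Ed => ‖s - p‖ ^ 2) (2 • (innerSL ℝ (t - p))) t := by
    simpa using ((hasFDerivAt_id t).sub_const p).norm_sq
  have h2 : HasFDerivAt (fun s : Ed => -a * ‖s - p‖ ^ 2)
      ((-a) • (2 • innerSL ℝ (t - p))) t := h1.const_mul (-a)
  have h3 := (Real.hasDerivAt_exp (-a * ‖t - p‖ ^ 2)).comp_hasFDerivAt t h2
  refine h3.congr_fderiv ?_
  ext y
  simp [gauss, smul_smul]
  ring

lemma fderiv_gauss_apply (a : ℝ) (p t v : Ed) :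
    fderiv ℝ (gauss a p) t v = -2 * a * gauss a p t * ⟪t - p, v⟫ := by
  rw [(hasFDerivAt_gauss a p t).fderiv]
  simp only [ContinuousLinearMap.smul_apply, innerSL_apply_apply, smul_eq_mul]

lemma fderiv_gauss_single (a : ℝ) (p t : Ed) (j : Fin d) :
    fderiv ℝ (gauss a p) t (EuclideanSpace.single j 1) = -2 * a * gauss a p t * (t j - p j) := by
  rw [fderiv_gauss_apply]
  have : ⟪t - p, EuclideanSpace.single j (1:ℝ)⟫ = t j - p j := by
    rw [EuclideanSpace.inner_single_right]
    simp [PiLp.sub_apply]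
  rw [this]
lemma norm_sq_eq_sum (x : Ed) : ‖x‖ ^ 2 = ∑ j, (x j) ^ 2 := by
  rw [EuclideanSpace.norm_eq, Real.sq_sqrt (by positivity)]
  simp [Real.norm_eq_abs, sq_abs]

lemma sum_single (t : Ed) : ∑ j, t j • EuclideanSpace.single j (1:ℝ) = t := by
  ext j
  have : (∑ i, t i • EuclideanSpace.single i (1:ℝ)) j = ∑ i, (t i • EuclideanSpace.single i (1:ℝ)) j :=
    by rw [WithLp.ofLp_sum, Finset.sum_apply]
  rw [this]
  simp [EuclideanSpace.single_apply]

lemma clm_apply_eq_sum (L : Ed →L[ℝ] ℝ) (t : Ed) :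
    L t = ∑ j, t j * L (EuclideanSpace.single j 1) := by
  conv_lhs => rw [← sum_single t]
  rw [map_sum]
  simp [smul_eq_mul]

lemma hasFDerivAt_fderiv_gauss_single (a : ℝ) (p t : Ed) (j : Fin d) :
    HasFDerivAt (fun s => fderiv ℝ (gauss a p) s (EuclideanSpace.single j 1))
      (((-2*a*gauss a p t) • (EuclideanSpace.proj j : Ed →L[ℝ] ℝ))
        + ((t j - p j) • ((-2*a) • ((-2 * a * gauss a p t) • innerSL ℝ (t - p))))) t := by
  have hfun : (fun s => fderiv ℝ (gauss a p) s (EuclideanSpace.single j 1))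
      = fun s : Ed => (-2 * a * gauss a p s) * (s j - p j) := by
    funext s
    rw [fderiv_gauss_single]
  rw [hfun]
  have hc : HasFDerivAt (fun s : Ed => -2 * a * gauss a p s)
      ((-2*a) • ((-2 * a * gauss a p t) • innerSL ℝ (t - p))) t :=
    (hasFDerivAt_gauss a p t).const_mul (-2*a)
  have hd : HasFDerivAt (fun s : Ed => s j - p j)
      (EuclideanSpace.proj j : Ed →L[ℝ] ℝ) t :=
    (EuclideanSpace.proj j : Ed →L[ℝ] ℝ).hasFDerivAt.sub_const (p j)
  simpa using hc.fun_mul hd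

lemma d2_gauss_single (a : ℝ) (p t : Ed) (j : Fin d) :
    fderiv ℝ (fun s => fderiv ℝ (gauss a p) s (EuclideanSpace.single j 1)) t
        (EuclideanSpace.single j 1)
      = (4*a^2*(t j - p j)^2 - 2*a) * gauss a p t := by
  rw [(hasFDerivAt_fderiv_gauss_single a p t j).fderiv]
  have h1 : ⟪t - p, EuclideanSpace.single j (1:ℝ)⟫ = t j - p j := by
    rw [EuclideanSpace.inner_single_right]
    simp [PiLp.sub_apply]
  simp only [ContinuousLinearMap.add_apply, ContinuousLinearMap.smul_apply, innerSL_apply_apply,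
    smul_eq_mul, h1]
  have h2 : (EuclideanSpace.proj j : Ed →L[ℝ] ℝ) (EuclideanSpace.single j 1) = 1 := by
    simp [EuclideanSpace.single_apply]
  rw [h2]
  ring

lemma laplacian_gauss (a : ℝ) (p t : Ed) :
    laplacian (gauss a p) t = (4*a^2*‖t - p‖^2 - 2*a*d) * gauss a p t := by
  unfold laplacian
  have : ∀ j : Fin d, fderiv ℝ (fun s => fderiv ℝ (gauss a p) s (EuclideanSpace.single j 1)) t
      (EuclideanSpace.single j 1) = (4*a^2*(t j - p j)^2 - 2*a) * gauss a p t :=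
    d2_gauss_single a p t
  rw [Finset.sum_congr rfl fun j _ => this j]
  have hsum : ∑ j, (t j - p j)^2 = ‖t - p‖^2 := by
    rw [norm_sq_eq_sum]
    exact Finset.sum_congr rfl fun j _ => by simp [PiLp.sub_apply]
  rw [← Finset.sum_mul, Finset.sum_sub_distrib, ← Finset.mul_sum, hsum]
  simp only [Finset.sum_const, Finset.card_univ, Fintype.card_fin, nsmul_eq_mul]
  ring

lemma hasFDerivAt_fderiv_apply {f : Ed → ℝ} (hf : ContDiff ℝ 2 f) (t v : Ed) :
    HasFDerivAt (fun s => fderiv ℝ f s v) ((fderiv ℝ (fderiv ℝ f) t).flip v) t := by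
  have h1 : ContDiff ℝ 1 (fderiv ℝ f) := hf.fderiv_right (by norm_num)
  have h : HasFDerivAt (fderiv ℝ f) (fderiv ℝ (fderiv ℝ f) t) t :=
    (h1.differentiable (by norm_num) t).hasFDerivAt
  have h2 := h.clm_apply (hasFDerivAt_const v t)
  simpa using h2

lemma fderiv_fderiv_apply {f : Ed → ℝ} (hf : ContDiff ℝ 2 f) (t v w : Ed) :
    fderiv ℝ (fun s => fderiv ℝ f s v) t w = fderiv ℝ (fderiv ℝ f) t w v :=
  by rw [(hasFDerivAt_fderiv_apply hf t v).fderiv]; rfl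

lemma laplacian_sub {f g : Ed → ℝ} (hf : ContDiff ℝ 2 f) (hg : ContDiff ℝ 2 g) (t : Ed) :
    laplacian (fun s => f s - g s) t = laplacian f t - laplacian g t := by
  unfold laplacian
  rw [← Finset.sum_sub_distrib]
  refine Finset.sum_congr rfl fun j _ => ?_
  have hfun : (fun s => fderiv ℝ (fun x => f x - g x) s (EuclideanSpace.single j 1))
      = fun s => fderiv ℝ f s (EuclideanSpace.single j 1)
          - fderiv ℝ g s (EuclideanSpace.single j 1) := by
    funext s
    rw [fderiv_fun_sub (hf.differentiable (by norm_num) s)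
      (hg.differentiable (by norm_num) s)]
    rfl
  rw [hfun, fderiv_fun_sub (hasFDerivAt_fderiv_apply hf t _).differentiableAt
      (hasFDerivAt_fderiv_apply hg t _).differentiableAt]
  rfl

lemma laplacian_const_mul {f : Ed → ℝ} (hf : ContDiff ℝ 2 f) (c : ℝ) (t : Ed) :
    laplacian (fun s => c * f s) t = c * laplacian f t := by
  unfold laplacian
  rw [Finset.mul_sum]
  refine Finset.sum_congr rfl fun j _ => ?_
  have hfun : (fun s => fderiv ℝ (fun x => c * f x) s (EuclideanSpace.single j 1))
      = fun s => c * fderiv ℝ f s (EuclideanSpace.single j 1) := by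
    funext s
    rw [fderiv_const_mul (hf.differentiable (by norm_num) s)]
    rfl
  rw [hfun, fderiv_const_mul (hasFDerivAt_fderiv_apply hf t _).differentiableAt]
  rfl


lemma contDiff_gauss (n : ℕ∞) (a : ℝ) (p : Ed) : ContDiff ℝ n (gauss a p) := by
  have : ContDiff ℝ n fun s : Ed => -a * ‖s - p‖ ^ 2 :=
    contDiff_const.mul ((contDiff_id.sub contDiff_const).norm_sq ℝ)
  exact Real.contDiff_exp.comp this

/-- `Ex t = exp (‖t‖^2/2)`. -/
def Ex (t : Ed) : ℝ := gauss (-(1/2)) 0 t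

lemma Ex_pos (t : Ed) : 0 < Ex t := gauss_pos _ _ _

lemma hasFDerivAt_Ex (t : Ed) : HasFDerivAt (Ex (d := d)) (Ex t • innerSL ℝ t) t := by
  have h := hasFDerivAt_gauss (d := d) (-(1/2)) 0 t
  rw [sub_zero] at h
  have he : (-2 * -(1/2) * gauss (-(1/2)) 0 t) = Ex t := by norm_num [Ex]
  rw [he] at h
  unfold Ex
  exact h

lemma mul_Ex_gauss (t : Ed) : Ex t * gauss (1/2) 0 t = 1 := by
  rw [Ex, gauss, gauss, ← Real.exp_add]
  norm_num

lemma d2_mul_Ex_single {u : Ed → ℝ} (hu : ContDiff ℝ 2 u) (t : Ed) (j : Fin d) :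
    fderiv ℝ (fun s => fderiv ℝ (fun x => u x * Ex x) s (EuclideanSpace.single j 1)) t
        (EuclideanSpace.single j 1)
      = fderiv ℝ (fun s => fderiv ℝ u s (EuclideanSpace.single j 1)) t
          (EuclideanSpace.single j 1) * Ex t
        + 2 * fderiv ℝ u t (EuclideanSpace.single j 1) * (Ex t * t j)
        + u t * (Ex t * (1 + t j ^ 2)) := by
  have hinner : ∀ s : Ed, ⟪s, EuclideanSpace.single j (1:ℝ)⟫ = s j := by
    intro s
    rw [EuclideanSpace.inner_single_right]
    simp
  have hproj : HasFDerivAt (fun s : Ed => s j)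
      (EuclideanSpace.proj j : Ed →L[ℝ] ℝ) t :=
    (EuclideanSpace.proj j : Ed →L[ℝ] ℝ).hasFDerivAt
  have hprojs : (EuclideanSpace.proj (𝕜 := ℝ) j) (EuclideanSpace.single j (1:ℝ)) = 1 := by
    simp [EuclideanSpace.single_apply]
  have hfun : (fun s => fderiv ℝ (fun x => u x * Ex x) s (EuclideanSpace.single j 1))
      = fun s => fderiv ℝ u s (EuclideanSpace.single j 1) * Ex s + u s * (Ex s * s j) := by
    funext s
    rw [((hu.differentiable (by norm_num) s).hasFDerivAt.fun_mul (hasFDerivAt_Ex s)).fderiv]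
    simp only [ContinuousLinearMap.add_apply, ContinuousLinearMap.smul_apply, smul_eq_mul,
      innerSL_apply_apply, hinner]
    ring
  rw [hfun]
  have h1 : HasFDerivAt (fun s => fderiv ℝ u s (EuclideanSpace.single j 1) * Ex s)
      (fderiv ℝ u t (EuclideanSpace.single j 1) • (Ex t • innerSL ℝ t)
        + Ex t • ((fderiv ℝ (fderiv ℝ u) t).flip (EuclideanSpace.single j 1))) t :=
    (hasFDerivAt_fderiv_apply hu t _).mul (hasFDerivAt_Ex t)
  have h2 : HasFDerivAt (fun s : Ed => Ex s * s j)
      (Ex t • (EuclideanSpace.proj j : Ed →L[ℝ] ℝ) + t j • (Ex t • innerSL ℝ t)) t :=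
    (hasFDerivAt_Ex t).mul hproj
  have h3 : HasFDerivAt (fun s : Ed => u s * (Ex s * s j))
      (u t • (Ex t • (EuclideanSpace.proj j : Ed →L[ℝ] ℝ) + t j • (Ex t • innerSL ℝ t))
        + (Ex t * t j) • fderiv ℝ u t) t :=
    (hu.differentiable (by norm_num) t).hasFDerivAt.mul h2
  rw [(h1.fun_add h3).fderiv]
  simp only [ContinuousLinearMap.add_apply, ContinuousLinearMap.smul_apply, smul_eq_mul,
    innerSL_apply_apply, hinner, hprojs, ContinuousLinearMap.flip_apply]
  rw [fderiv_fderiv_apply hu]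
  ring

lemma laplacian_mul_Ex {u : Ed → ℝ} (hu : ContDiff ℝ 2 u) (t : Ed) :
    laplacian (fun s => u s * Ex s) t
      = Ex t * (laplacian u t + 2 * fderiv ℝ u t t + ((d : ℝ) + ‖t‖ ^ 2) * u t) := by
  unfold laplacian
  rw [Finset.sum_congr rfl fun j _ => d2_mul_Ex_single hu t j]
  have hsum3 : ∑ j, (t j)^2 = ‖t‖^2 := (norm_sq_eq_sum t).symm
  have hdir : fderiv ℝ u t t = ∑ j, t j * fderiv ℝ u t (EuclideanSpace.single j 1) :=
    clm_apply_eq_sum (fderiv ℝ u t) t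
  rw [Finset.sum_add_distrib, Finset.sum_add_distrib]
  rw [← Finset.sum_mul]
  have e2 : ∑ j, 2 * fderiv ℝ u t (EuclideanSpace.single j 1) * (Ex t * t j)
      = 2 * Ex t * fderiv ℝ u t t := by
    rw [hdir, Finset.mul_sum]
    exact Finset.sum_congr rfl fun j _ => by ring
  have e3 : ∑ j, u t * (Ex t * (1 + t j ^ 2)) = u t * (Ex t * ((d : ℝ) + ‖t‖^2)) := by
    rw [← Finset.mul_sum, ← Finset.mul_sum, ← hsum3]
    congr 1
    congr 1
    rw [Finset.sum_add_distrib]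
    simp
  rw [e2, e3]
  ring

lemma fderiv_mul_Ex_self {u : Ed → ℝ} (hu : ContDiff ℝ 2 u) (t : Ed) :
    fderiv ℝ (fun s => u s * Ex s) t t = Ex t * (fderiv ℝ u t t + ‖t‖ ^ 2 * u t) := by
  rw [((hu.differentiable (by norm_num) t).hasFDerivAt.fun_mul (hasFDerivAt_Ex t)).fderiv]
  simp only [ContinuousLinearMap.add_apply, ContinuousLinearMap.smul_apply, smul_eq_mul,
    innerSL_apply_apply, real_inner_self_eq_norm_sq]
  ring

lemma line_hasDerivAt {f : Ed → ℝ} (t v : Ed) (x : ℝ) (hdf : DifferentiableAt ℝ f (t + x • v)) :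
    HasDerivAt (fun y : ℝ => f (t + y • v)) (fderiv ℝ f (t + x • v) v) x := by
  have hline : HasDerivAt (fun y : ℝ => t + y • v) v x := by
    simpa using ((hasDerivAt_id x).smul_const v).const_add t
  exact hdf.hasFDerivAt.comp_hasDerivAt x hline

lemma second_dir_nonpos {f : Ed → ℝ} (hf : ContDiff ℝ 2 f) {t : Ed} (h : IsLocalMax f t)
    (v : Ed) : fderiv ℝ (fun s => fderiv ℝ f s v) t v ≤ 0 := by
  by_contra hpos
  push_neg at hpos
  set c := fderiv ℝ (fun s => fderiv ℝ f s v) t v with hc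
  set g1 : ℝ → ℝ := fun x => fderiv ℝ f (t + x • v) v with hg1def
  have hg1 : ∀ x : ℝ, HasDerivAt g1
      (fderiv ℝ (fderiv ℝ f) (t + x • v) v v) x := by
    intro x
    have hline : HasDerivAt (fun y : ℝ => t + y • v) v x := by
      simpa using ((hasDerivAt_id x).smul_const v).const_add t
    exact (hasFDerivAt_fderiv_apply hf (t + x • v) v).comp_hasDerivAt x hline
  have hceq : c = fderiv ℝ (fderiv ℝ f) t v v := fderiv_fderiv_apply hf t v v
  have hg10 : HasDerivAt g1 c 0 := by
    rw [hceq]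
    simpa using hg1 0
  have hg1zero : g1 0 = 0 := by
    simp [hg1def, h.fderiv_eq_zero]
  -- slope positivity near 0 from the right
  have hslope : Filter.Tendsto (slope g1 0) (nhdsWithin 0 {(0:ℝ)}ᶜ) (nhds c) :=
    hasDerivAt_iff_tendsto_slope.mp hg10
  have hslope' : Filter.Tendsto (slope g1 0) (nhdsWithin 0 (Set.Ioi 0)) (nhds c) :=
    hslope.mono_left (nhdsWithin_mono 0 (fun x hx => ne_of_gt hx))
  have hev : ∀ᶠ x in nhdsWithin 0 (Set.Ioi 0), 0 < slope g1 0 x :=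
    hslope'.eventually (eventually_gt_nhds hpos)
  obtain ⟨η, hη, hηsub⟩ := mem_nhdsGT_iff_exists_Ioo_subset.mp hev
  have hg1pos : ∀ x ∈ Set.Ioo (0:ℝ) η, 0 < g1 x := by
    intro x hx
    have hs := hηsub hx
    have hgx : 0 < x⁻¹ * g1 x := by simpa [slope, hg1zero] using hs
    have hxx : g1 x = x * (x⁻¹ * g1 x) :=
      (mul_inv_cancel_left₀ (ne_of_gt hx.1) (g1 x)).symm
    rw [hxx]
    exact mul_pos hx.1 hgx
  -- g is strictly monotone on [0, η]
  set g : ℝ → ℝ := fun x => f (t + x • v) with hgdef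
  have hgderiv : ∀ x : ℝ, HasDerivAt g (g1 x) x := fun x =>
    line_hasDerivAt t v x ((hf.differentiable (by norm_num)) _)
  have hgmono : StrictMonoOn g (Set.Icc 0 η) := by
    refine strictMonoOn_of_deriv_pos (convex_Icc 0 η) ?_ ?_
    · exact fun x _ => (hgderiv x).continuousAt.continuousWithinAt
    · intro x hx
      rw [interior_Icc] at hx
      rw [(hgderiv x).deriv]
      exact hg1pos x hx
  -- contradiction with local max
  have hmax : ∀ᶠ x in nhds (0:ℝ), g x ≤ g 0 := by
    have hcont : Filter.Tendsto (fun x : ℝ => t + x • v) (nhds 0) (nhds t) := by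
      have : Continuous (fun x : ℝ => t + x • v) :=
        continuous_const.add (continuous_id.smul continuous_const)
      have h0 : t + (0:ℝ) • v = t := by simp
      simpa [h0] using this.tendsto 0
    have := hcont.eventually h
    simpa [hgdef] using this
  obtain ⟨δ, hδ, hball⟩ := Metric.eventually_nhds_iff.mp hmax
  have hη' : (0:ℝ) < η := hη
  set x0 := min η δ / 2 with hx0
  have hx0pos : 0 < x0 := by rw [hx0]; exact half_pos (lt_min hη' hδ)
  have hx0η : x0 < η := by
    have h1 : min η δ ≤ η := min_le_left _ _
    rw [hx0]; linarith
  have hx0δ : x0 < δ := by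
    have h1 : min η δ ≤ δ := min_le_right _ _
    rw [hx0]; linarith
  have hle : g x0 ≤ g 0 := hball (by simp [Real.dist_eq, abs_of_pos hx0pos, hx0δ])
  have hlt : g 0 < g x0 :=
    hgmono (Set.mem_Icc.mpr ⟨le_refl 0, le_of_lt hη'⟩)
      (Set.mem_Icc.mpr ⟨le_of_lt hx0pos, le_of_lt hx0η⟩) hx0pos
  linarith

lemma laplacian_nonpos_of_isLocalMax {f : Ed → ℝ} (hf : ContDiff ℝ 2 f) {t : Ed}
    (h : IsLocalMax f t) : laplacian f t ≤ 0 :=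
  Finset.sum_nonpos fun j _ => second_dir_nonpos hf h _

lemma psi_eq_gauss (t : Ed) : Real.exp (-‖t‖ ^ 2 / 2) = gauss (1/2) 0 t := by
  rw [gauss, sub_zero]
  congr 1
  ring

lemma part1 (t : Ed) :
    laplacian (fun s : Ed => Real.exp (-‖s‖ ^ 2 / 2)) t
      - (‖t‖ ^ 2 - (d : ℝ)) * Real.exp (-‖t‖ ^ 2 / 2) = 0 := by
  have hfun : (fun s : Ed => Real.exp (-‖s‖ ^ 2 / 2)) = gauss (1/2) 0 :=
    funext psi_eq_gauss
  rw [hfun, psi_eq_gauss, laplacian_gauss, sub_zero]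
  ring

lemma laplacian_add {f g : Ed → ℝ} (hf : ContDiff ℝ 2 f) (hg : ContDiff ℝ 2 g) (t : Ed) :
    laplacian (fun s => f s + g s) t = laplacian f t + laplacian g t := by
  unfold laplacian
  rw [← Finset.sum_add_distrib]
  refine Finset.sum_congr rfl fun j _ => ?_
  have hfun : (fun s => fderiv ℝ (fun x => f x + g x) s (EuclideanSpace.single j 1))
      = fun s => fderiv ℝ f s (EuclideanSpace.single j 1)
          + fderiv ℝ g s (EuclideanSpace.single j 1) := by
    funext s
    rw [fderiv_fun_add (hf.differentiable (by norm_num) s) (hg.differentiable (by norm_num) s)]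
    rfl
  rw [hfun, fderiv_fun_add (hasFDerivAt_fderiv_apply hf t _).differentiableAt
      (hasFDerivAt_fderiv_apply hg t _).differentiableAt]
  rfl

lemma tendsto_gauss_cocompact {a : ℝ} (ha : 0 < a) (p : Ed) :
    Filter.Tendsto (gauss a p) (Filter.cocompact Ed) (nhds 0) := by
  have hnorm : Filter.Tendsto (fun t : Ed => ‖t - p‖) (Filter.cocompact Ed) Filter.atTop := by
    refine Filter.tendsto_atTop_mono (f := fun t : Ed => ‖t‖ - ‖p‖)
      (fun t => norm_sub_norm_le t p) ?_
    exact Filter.tendsto_atTop_add_const_right _ (-‖p‖) tendsto_norm_cocompact_atTop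
  have hsq : Filter.Tendsto (fun t : Ed => ‖t - p‖ ^ 2) (Filter.cocompact Ed) Filter.atTop := by
    simpa [sq] using hnorm.atTop_mul_atTop₀ hnorm
  have hneg : Filter.Tendsto (fun t : Ed => -a * ‖t - p‖ ^ 2) (Filter.cocompact Ed)
      Filter.atBot := hsq.const_mul_atTop_of_neg (by linarith)
  exact Real.tendsto_exp_atBot.comp hneg

lemma eventually_small {φ : Ed → ℝ} (htend : Filter.Tendsto φ (Filter.cocompact Ed) (nhds 0))
    {ε : ℝ} (hε : 0 < ε) : ∃ R : ℝ, ∀ t : Ed, R ≤ ‖t‖ → |φ t| < ε := by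
  have hmem : φ ⁻¹' (Metric.ball 0 ε) ∈ Filter.cocompact Ed :=
    htend (Metric.ball_mem_nhds 0 hε)
  obtain ⟨K, hK, hKsub⟩ := Filter.mem_cocompact.mp hmem
  obtain ⟨R, hR⟩ := hK.isBounded.subset_closedBall 0
  refine ⟨R + 1, fun t ht => ?_⟩
  have htK : t ∉ K := by
    intro hmemK
    have := hR hmemK
    rw [Metric.mem_closedBall, dist_zero_right] at this
    linarith
  have := hKsub htK
  simpa [Real.dist_eq, abs_sub_comm] using this

lemma exterior_barrier {u : Ed → ℝ} (hu : ContDiff ℝ 2 u)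
    (hlapu : ∀ t : Ed, laplacian u t = (‖t‖ ^ 2 - (d : ℝ)) * u t)
    (htend : Filter.Tendsto u (Filter.cocompact Ed) (nhds 0))
    (c : ℝ) (hc : ∀ t : Ed, ‖t‖ = (d : ℝ) + 1 → u t ≤ c * gauss (1/2) 0 t) :
    ∀ t : Ed, (d : ℝ) + 1 ≤ ‖t‖ → u t ≤ c * gauss (1/2) 0 t := by
  have hR0pos : (1:ℝ) ≤ (d : ℝ) + 1 := by
    have : (0:ℝ) ≤ d := Nat.cast_nonneg d
    linarith
  intro t₀ ht₀
  have key : ∀ ε : ℝ, 0 < ε →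
      u t₀ ≤ c * gauss (1/2) 0 t₀ + ε * gauss (1/4) 0 t₀ := by
    intro ε hε
    by_contra hcon
    push_neg at hcon
    have hφcont : Continuous (fun s : Ed => u s - (c * gauss (1/2) 0 s + ε * gauss (1/4) 0 s)) := by
      refine ((hu.continuous).sub (Continuous.add ?_ ?_))
      · exact continuous_const.mul ((contDiff_gauss 2 (1/2) 0).continuous)
      · exact continuous_const.mul ((contDiff_gauss 2 (1/4) 0).continuous)
    have hφtend : Filter.Tendsto
        (fun s : Ed => u s - (c * gauss (1/2) 0 s + ε * gauss (1/4) 0 s))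
        (Filter.cocompact Ed) (nhds 0) := by
      have h1 := (tendsto_gauss_cocompact (by norm_num : (0:ℝ) < 1/2) (0 : Ed)).const_mul c
      have h2 := (tendsto_gauss_cocompact (by norm_num : (0:ℝ) < 1/4) (0 : Ed)).const_mul ε
      have h3 := htend.sub (h1.add h2)
      simpa using h3
    set φ : Ed → ℝ := fun s => u s - (c * gauss (1/2) 0 s + ε * gauss (1/4) 0 s) with hφ
    have hφ2 : ContDiff ℝ 2 φ := by
      rw [hφ]
      refine hu.sub (ContDiff.add ?_ ?_)
      · exact contDiff_const.mul (contDiff_gauss 2 (1/2) 0)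
      · exact contDiff_const.mul (contDiff_gauss 2 (1/4) 0)
    have hlapφ : ∀ s : Ed, laplacian φ s
        = (‖s‖ ^ 2 - d) * φ s
          + ε * (3/4 * ‖s‖ ^ 2 - (d : ℝ)/2) * gauss (1/4) 0 s := by
      intro s
      have hgsum : ContDiff ℝ 2 (fun s : Ed => c * gauss (1/2) 0 s + ε * gauss (1/4) 0 s) := by
        refine ContDiff.add ?_ ?_
        · exact contDiff_const.mul (contDiff_gauss 2 (1/2) 0)
        · exact contDiff_const.mul (contDiff_gauss 2 (1/4) 0)
      rw [hφ]
      rw [laplacian_sub hu hgsum]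
      rw [laplacian_add (contDiff_const.mul (contDiff_gauss 2 (1/2) 0))
        (contDiff_const.mul (contDiff_gauss 2 (1/4) 0))]
      rw [laplacian_const_mul (contDiff_gauss 2 (1/2) 0),
        laplacian_const_mul (contDiff_gauss 2 (1/4) 0)]
      rw [laplacian_gauss, laplacian_gauss, hlapu]
      rw [sub_zero]
      dsimp only
      ring
    have hφt₀ : 0 < φ t₀ := by rw [hφ]; dsimp only; linarith
    have hφsphere : ∀ s : Ed, ‖s‖ = (d : ℝ) + 1 → φ s ≤ -(ε * gauss (1/4) 0 s) := by
      intro s hs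
      have h1 := hc s hs
      rw [hφ]; dsimp only; linarith
    clear_value φ
    clear hφ
    obtain ⟨R1, hR1⟩ := eventually_small hφtend hφt₀
    set K : Set Ed := {s : Ed | (d : ℝ) + 1 ≤ ‖s‖ ∧ φ t₀ ≤ φ s} with hK
    have hKne : t₀ ∈ K := ⟨ht₀, le_refl _⟩
    have hKclosed : IsClosed K := by
      refine IsClosed.inter ?_ ?_
      · exact isClosed_le continuous_const continuous_norm
      · exact isClosed_le continuous_const hφcont
    have hKbdd : Bornology.IsBounded K := by
      refine (Metric.isBounded_iff_subset_closedBall 0).mpr ⟨R1, fun s hs => ?_⟩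
      rw [Metric.mem_closedBall, dist_zero_right]
      by_contra hns
      push_neg at hns
      have h5 := hR1 s (le_of_lt hns)
      have h2 : φ s < φ t₀ := lt_of_le_of_lt (le_abs_self _) h5
      exact absurd hs.2 (not_le.mpr h2)
    have hKcompact : IsCompact K := Metric.isCompact_of_isClosed_isBounded hKclosed hKbdd
    obtain ⟨tm, htmK, htmmax⟩ := hKcompact.exists_isMaxOn ⟨t₀, hKne⟩ hφcont.continuousOn
    have hmaxt₀ : φ t₀ ≤ φ tm := htmmax hKne
    have hsphere : ‖tm‖ ≠ (d : ℝ) + 1 := by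
      intro heq
      have h2 := hφsphere tm heq
      have h3 : 0 < ε * gauss (1/4) 0 tm := mul_pos hε (gauss_pos _ _ _)
      linarith
    have htmgt : (d : ℝ) + 1 < ‖tm‖ := lt_of_le_of_ne htmK.1 (Ne.symm hsphere)
    have hlocmax : IsLocalMax φ tm := by
      rw [IsLocalMax, IsMaxFilter]
      rw [Metric.eventually_nhds_iff]
      refine ⟨‖tm‖ - ((d : ℝ) + 1), by linarith, fun {s} hdist => ?_⟩
      have hsnorm : (d : ℝ) + 1 ≤ ‖s‖ := by
        have h5 : ‖tm‖ - ‖s‖ ≤ ‖s - tm‖ := by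
          have h6 := norm_sub_norm_le tm s
          rwa [norm_sub_rev] at h6
        rw [dist_eq_norm] at hdist
        linarith
      by_cases hcase : φ t₀ ≤ φ s
      · exact htmmax (⟨hsnorm, hcase⟩ : s ∈ K)
      · push_neg at hcase
        linarith
    have hlapnonpos : laplacian φ tm ≤ 0 := laplacian_nonpos_of_isLocalMax hφ2 hlocmax
    have hφtm : 0 < φ tm := lt_of_lt_of_le hφt₀ hmaxt₀
    have hnormsq : (d : ℝ) < ‖tm‖ ^ 2 := by nlinarith
    have hpos2 : (0:ℝ) < 3/4 * ‖tm‖ ^ 2 - (d : ℝ)/2 := by nlinarith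
    have hgtm : 0 < gauss (1/4 : ℝ) (0 : Ed) tm := gauss_pos _ _ _
    have p1 : 0 < (‖tm‖ ^ 2 - d) * φ tm := mul_pos (by linarith) hφtm
    have p2 : 0 < ε * (3/4 * ‖tm‖ ^ 2 - (d : ℝ)/2) * gauss (1/4) 0 tm :=
      mul_pos (mul_pos hε hpos2) hgtm
    have := hlapφ tm
    linarith
  by_contra hfinal
  push_neg at hfinal
  have hG : 0 < gauss (1/4) 0 t₀ := gauss_pos _ _ _
  have hApos : 0 < u t₀ - c * gauss (1/2) 0 t₀ := by linarith
  have hkey := key ((u t₀ - c * gauss (1/2) 0 t₀) / (2 * gauss (1/4) 0 t₀))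
    (div_pos hApos (by linarith))
  have heq2 : (u t₀ - c * gauss (1/2) 0 t₀) / (2 * gauss (1/4) 0 t₀) * gauss (1/4) 0 t₀
      = (u t₀ - c * gauss (1/2) 0 t₀) / 2 := by
    field_simp
  rw [heq2] at hkey
  linarith

lemma deriv_nonpos_right {g : ℝ → ℝ} {c : ℝ} (hg : HasDerivAt g c 0) {η : ℝ} (hη : 0 < η)
    (hle : ∀ x ∈ Set.Ioo (0:ℝ) η, g x ≤ g 0) : c ≤ 0 := by
  have hslope := hasDerivAt_iff_tendsto_slope.mp hg
  have hslope' : Filter.Tendsto (slope g 0) (nhdsWithin 0 (Set.Ioi 0)) (nhds c) :=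
    hslope.mono_left (nhdsWithin_mono 0 (fun x hx => ne_of_gt hx))
  refine le_of_tendsto hslope' ?_
  filter_upwards [Ioo_mem_nhdsGT hη] with x hx
  rw [slope_def_field]
  have h1 : g x - g 0 ≤ 0 := sub_nonpos.mpr (hle x hx)
  have h2 : (0:ℝ) ≤ x - 0 := by linarith [hx.1]
  exact div_nonpos_of_nonpos_of_nonneg h1 h2

set_option maxHeartbeats 1000000 in
lemma strong_max_principle {w : Ed → ℝ} (hd : 0 < d) (hw2 : ContDiff ℝ 2 w)
    (hLw : ∀ t : Ed, laplacian w t = 2 * fderiv ℝ w t t)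
    {t₁ : Ed} (hglob : ∀ s : Ed, w s ≤ w t₁) : ∀ s : Ed, w s = w t₁ := by
  by_contra hcon
  push_neg at hcon
  obtain ⟨p0, hp0⟩ := hcon
  have hp0lt : w p0 < w t₁ := lt_of_le_of_ne (hglob p0) hp0
  have hwcont : Continuous w := hw2.continuous
  have hwdiff : Differentiable ℝ w := hw2.differentiable (by norm_num)
  set Z : Set Ed := {s : Ed | w s = w t₁} with hZ
  have hZne : Z.Nonempty := ⟨t₁, rfl⟩
  have hZclosed : IsClosed Z := isClosed_eq hwcont continuous_const
  have hp0Z : p0 ∉ Z := hp0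
  set ρ := Metric.infDist p0 Z with hρ
  have hρpos : 0 < ρ := (hZclosed.notMem_iff_infDist_pos hZne).mp hp0Z
  obtain ⟨z, hzZ, hzdist⟩ := hZclosed.exists_infDist_eq_dist hZne p0
  rw [← hρ] at hzdist
  -- inside the ball of radius ρ around p0, w < w t₁
  clear_value ρ
  have hball : ∀ x : Ed, dist x p0 < ρ → w x < w t₁ := by
    intro x hx
    refine lt_of_le_of_ne (hglob x) fun heq => ?_
    have : ρ ≤ dist p0 x := by
      rw [hρ]
      exact Metric.infDist_le_dist_of_mem (hZ ▸ heq : x ∈ Z)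
    rw [dist_comm] at this
    linarith
  -- the inner sphere and its max
  have hi0 : (0 : ℕ) < d := hd
  set i0 : Fin d := ⟨0, hi0⟩ with hi0def
  have hsphpt : (p0 + (ρ/2) • EuclideanSpace.single i0 (1:ℝ)) ∈ Metric.sphere p0 (ρ/2) := by
    rw [Metric.mem_sphere, dist_eq_norm]
    simp only [add_sub_cancel_left]
    rw [norm_smul, EuclideanSpace.norm_single]
    rw [Real.norm_eq_abs, abs_of_pos (half_pos hρpos), norm_one, mul_one]
  obtain ⟨q, hqS, hqmax⟩ := (isCompact_sphere p0 (ρ/2)).exists_isMaxOn ⟨_, hsphpt⟩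
    hwcont.continuousOn
  have hqdist : dist q p0 = ρ/2 := hqS
  have hq_lt : w q < w t₁ := hball q (by rw [hqdist]; linarith)
  -- barrier parameters
  set β := (2 * (d:ℝ) + 4 * ρ * (‖p0‖ + ρ) + 1) / ρ^2 with hβ
  have hβpos : 0 < β := by
    apply div_pos
    · have h1 : (0:ℝ) ≤ d := Nat.cast_nonneg d
      have h2 : (0:ℝ) ≤ ‖p0‖ := norm_nonneg _
      nlinarith
    · positivity
  have hβρ : β * ρ^2 = 2 * (d:ℝ) + 4 * ρ * (‖p0‖ + ρ) + 1 := by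
    rw [hβ]
    field_simp
  clear_value β
  set ε := (w t₁ - w q) / (2 * gauss β p0 q) with hε
  have hgq : 0 < gauss β p0 q := gauss_pos _ _ _
  have hεpos : 0 < ε := div_pos (by linarith) (by linarith)
  have hεgauss : ε * gauss β p0 q = (w t₁ - w q) / 2 := by
    rw [hε]
    field_simp
  clear_value ε
  set v : Ed → ℝ := fun s => w s + ε * gauss β p0 s with hv
  have hv2 : ContDiff ℝ 2 v := hw2.add (contDiff_const.mul (contDiff_gauss 2 β p0))
  have hvcont : Continuous v := hv2.continuous
  have hfv : ∀ t y : Ed, fderiv ℝ v t y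
      = fderiv ℝ w t y + ε * (-2 * β * gauss β p0 t * ⟪t - p0, y⟫) := by
    intro t y
    have h1 : HasFDerivAt v (fderiv ℝ w t
        + ε • ((-2 * β * gauss β p0 t) • innerSL ℝ (t - p0))) t := by
      rw [hv]
      exact (hwdiff t).hasFDerivAt.add ((hasFDerivAt_gauss β p0 t).const_mul ε)
    rw [h1.fderiv]
    simp only [ContinuousLinearMap.add_apply, ContinuousLinearMap.smul_apply, innerSL_apply_apply,
      smul_eq_mul]
  have hlapv : ∀ t : Ed, laplacian v t = laplacian w t
      + ε * ((4 * β^2 * ‖t - p0‖^2 - 2 * β * d) * gauss β p0 t) := by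
    intro t
    rw [hv]
    rw [laplacian_add hw2 (contDiff_const.mul (contDiff_gauss 2 β p0))]
    rw [laplacian_const_mul (contDiff_gauss 2 β p0), laplacian_gauss]
  -- the annulus
  have hveq : ∀ s : Ed, v s = w s + ε * gauss β p0 s := fun s => by rw [hv]
  clear_value v
  set A : Set Ed := Metric.closedBall p0 ρ \ Metric.ball p0 (ρ/2) with hA
  have hAcompact : IsCompact A := (isCompact_closedBall p0 ρ).diff Metric.isOpen_ball
  have hzA : z ∈ A := by
    constructor
    · rw [Metric.mem_closedBall, dist_comm, ← hzdist]
    · rw [Metric.mem_ball, dist_comm, ← hzdist]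
      intro h
      linarith
  obtain ⟨tv, htvA, htvmax⟩ := hAcompact.exists_isMaxOn ⟨z, hzA⟩ hvcont.continuousOn
  have htv1 : dist tv p0 ≤ ρ := htvA.1
  have htv2 : ρ/2 ≤ dist tv p0 := by
    have := htvA.2
    rw [Metric.mem_ball] at this
    linarith [not_lt.mp this]
  -- positivity of Lv on the annulus kills interior max
  have hLvpos : ∀ t : Ed, ρ/2 ≤ dist t p0 → dist t p0 ≤ ρ →
      0 < laplacian v t - 2 * fderiv ℝ v t t := by
    intro t h1 h2
    rw [hlapv, hfv, hLw]
    have hg : 0 < gauss β p0 t := gauss_pos _ _ _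
    have hrn : ‖t - p0‖ = dist t p0 := (dist_eq_norm t p0).symm
    have hinner : -(‖t - p0‖ * ‖t‖) ≤ ⟪t - p0, t⟫ := by
      have := abs_real_inner_le_norm (t - p0) t
      linarith [neg_abs_le (⟪t - p0, t⟫ : ℝ)]
    have hnt : ‖t‖ ≤ ‖p0‖ + ρ := by
      have h3 : ‖t - p0‖ ≤ ρ := by rw [hrn]; exact h2
      have h4 := norm_sub_norm_le t p0
      linarith
    have hr2 : ρ^2/4 ≤ ‖t - p0‖^2 := by
      rw [hrn]
      nlinarith [hρpos]
    have hkey : 1 ≤ 4 * β * ‖t - p0‖^2 - 2 * (d:ℝ) - 4 * (‖p0‖ + ρ) * ρ := by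
      have h5 : β * ρ^2 ≤ 4 * β * ‖t - p0‖^2 := by nlinarith
      rw [hβρ] at h5
      nlinarith
    have hbound : ⟪t - p0, t⟫ ≥ -((‖p0‖ + ρ) * ρ) := by
      have h6 : ‖t - p0‖ * ‖t‖ ≤ (‖p0‖ + ρ) * ρ := by
        have h7 : ‖t - p0‖ ≤ ρ := by rw [hrn]; exact h2
        have h8 : 0 ≤ ‖t - p0‖ := norm_nonneg _
        have h9 : 0 ≤ ‖t‖ := norm_nonneg _
        nlinarith
      linarith
    have expand : 2 * fderiv ℝ w t t + ε * ((4 * β^2 * ‖t - p0‖^2 - 2 * β * ↑d) * gauss β p0 t)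
        - 2 * (fderiv ℝ w t t + ε * (-2 * β * gauss β p0 t * ⟪t - p0, t⟫))
        = ε * gauss β p0 t * β * ((4 * β * ‖t - p0‖^2 - 2 * (d:ℝ)) + 4 * ⟪t - p0, t⟫) := by
      ring
    rw [expand]
    have h10 : 0 < (4 * β * ‖t - p0‖^2 - 2 * (d:ℝ)) + 4 * ⟪t - p0, t⟫ := by nlinarith
    have h11 : 0 < ε * gauss β p0 t * β := by positivity
    exact mul_pos h11 h10
  -- tv cannot be in the open annulus
  have htvbdry : dist tv p0 = ρ/2 ∨ dist tv p0 = ρ := by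
    by_contra hb
    push_neg at hb
    have h1 : ρ/2 < dist tv p0 := lt_of_le_of_ne htv2 (Ne.symm hb.1)
    have h2 : dist tv p0 < ρ := lt_of_le_of_ne htv1 hb.2
    have hloc : IsLocalMax v tv := by
      rw [IsLocalMax, IsMaxFilter, Metric.eventually_nhds_iff]
      refine ⟨min (dist tv p0 - ρ/2) (ρ - dist tv p0), by
        apply lt_min <;> linarith, fun {s} hdist => ?_⟩
      have hs1 := lt_min_iff.mp hdist
      have hd1 : dist s p0 ≤ ρ := by
        have := dist_triangle s tv p0
        linarith [hs1.2]
      have hd2 : ¬ (dist s p0 < ρ/2) := by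
        have h3 := dist_triangle tv s p0
        rw [dist_comm tv s] at h3
        intro h4
        linarith [hs1.1]
      exact htvmax (⟨hd1, hd2⟩ : s ∈ A)
    have hfz : fderiv ℝ v tv = 0 := hloc.fderiv_eq_zero
    have hlapnonpos : laplacian v tv ≤ 0 := laplacian_nonpos_of_isLocalMax hv2 hloc
    have := hLvpos tv htv2 htv1
    rw [hfz] at this
    simp only [ContinuousLinearMap.zero_apply] at this
    linarith
  -- tv is not on the inner sphere
  have hnotinner : ¬ (dist tv p0 = ρ/2) := by
    intro heq
    have h1 : v tv ≤ w q + ε * gauss β p0 q := by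
      rw [hveq tv]
      have h2 : w tv ≤ w q := hqmax (heq : tv ∈ Metric.sphere p0 (ρ/2))
      have h3 : gauss β p0 tv = gauss β p0 q := by
        rw [gauss, gauss]
        rw [← dist_eq_norm, ← dist_eq_norm, heq, hqdist]
      rw [h3]
      linarith
    have h4 := hεgauss
    have h5 : v z ≤ v tv := htvmax hzA
    have h6 : w t₁ ≤ v z := by
      rw [hveq z]
      have hz1 : w z = w t₁ := hzZ
      have hz2 : 0 < ε * gauss β p0 z := mul_pos hεpos (gauss_pos _ _ _)
      linarith
    rw [h4] at h1
    linarith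
  have houter : dist tv p0 = ρ := htvbdry.resolve_left hnotinner
  -- w tv = w t₁ : tv is a global max of w
  have hwtv : w tv = w t₁ := by
    have h5 : v z ≤ v tv := htvmax hzA
    have hz1 : w z = w t₁ := hzZ
    have h3 : gauss β p0 tv = gauss β p0 z := by
      rw [gauss, gauss, ← dist_eq_norm, ← dist_eq_norm, houter]
      rw [dist_comm p0 z] at hzdist
      rw [← hzdist]
    rw [hveq z, hveq tv] at h5
    rw [hz1, h3] at h5
    have := hglob tv
    linarith
  have hlocw : IsLocalMax w tv := Filter.Eventually.of_forall (fun s => by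
    rw [hwtv]; exact hglob s)
  have hfw0 : fderiv ℝ w tv = 0 := hlocw.fderiv_eq_zero
  -- Hopf contradiction along the inward direction
  set n : Ed := p0 - tv with hn
  have hnnorm : ‖tv - p0‖ = ρ := by rw [← dist_eq_norm]; exact houter
  have hc0 : fderiv ℝ v tv n = 2 * β * ρ^2 * ε * gauss β p0 tv := by
    rw [hfv, hfw0]
    simp only [ContinuousLinearMap.zero_apply]
    have : ⟪tv - p0, n⟫ = -(ρ^2) := by
      rw [hn]
      have h1 : p0 - tv = -(tv - p0) := by abel
      rw [h1, inner_neg_right, real_inner_self_eq_norm_sq, hnnorm]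
    rw [this]
    ring
  have hcpos : 0 < fderiv ℝ v tv n := by
    rw [hc0]
    have := gauss_pos β p0 tv
    positivity
  have hg : HasDerivAt (fun x : ℝ => v (tv + x • n)) (fderiv ℝ v tv n) 0 := by
    have h := line_hasDerivAt (f := v) tv n 0 ((hv2.differentiable (by norm_num)) _)
    simpa using h
  have hgle : ∀ x ∈ Set.Ioo (0:ℝ) (1/2), v (tv + x • n) ≤ v (tv + (0:ℝ) • n) := by
    intro x hx
    have hmem : tv + x • n ∈ A := by
      have hvec : tv + x • n - p0 = (1 - x) • (tv - p0) := by
        rw [hn]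
        module
      have hnorm2 : dist (tv + x • n) p0 = (1 - x) * ρ := by
        rw [dist_eq_norm, hvec, norm_smul, hnnorm, Real.norm_eq_abs,
          abs_of_pos (by linarith [hx.2] : (0:ℝ) < 1 - x)]
      constructor
      · rw [Metric.mem_closedBall, hnorm2]
        nlinarith [hx.1, hρpos]
      · rw [Metric.mem_ball, hnorm2]
        intro h
        nlinarith [hx.2, hρpos]
    have := htvmax hmem
    simpa using this
  have : fderiv ℝ v tv n ≤ 0 := by
    refine deriv_nonpos_right hg (by norm_num : (0:ℝ) < 1/2) ?_
    intro x hx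
    exact hgle x hx
  linarith

lemma laplacian_u {f : Ed → ℝ} (hf : ContDiff ℝ 2 f)
    (hpde : ∀ t : Ed, laplacian f t - (‖t‖ ^ 2 - (d : ℝ)) * f t = 0) :
    ∀ s : Ed, laplacian (fun x => f x - gauss (1/2) 0 x) s
      = (‖s‖ ^ 2 - (d : ℝ)) * (f s - gauss (1/2) 0 s) := by
  intro s
  rw [laplacian_sub hf (contDiff_gauss 2 (1/2) 0), laplacian_gauss]
  have h1 : laplacian f s = (‖s‖ ^ 2 - (d : ℝ)) * f s := by linarith [hpde s]
  rw [h1, sub_zero]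
  ring

end StmtAux

open StmtAux


/-- `Ψ₀(t) = exp(−‖t‖²/2)` satisfies `Δf(t) − (‖t‖² − d) f(t) = 0` with `f 0 = 1`, and any
smooth, bounded solution of this PDE with `f 0 = 1` tending to `0` at infinity equals `Ψ₀`. -/
theorem stmt1 {d : ℕ} :
    (∀ t : EuclideanSpace ℝ (Fin d),
        laplacian (fun s => Real.exp (-‖s‖ ^ 2 / 2)) t
          - (‖t‖ ^ 2 - (d : ℝ)) * Real.exp (-‖t‖ ^ 2 / 2) = 0)
    ∧ Real.exp (-‖(0 : EuclideanSpace ℝ (Fin d))‖ ^ 2 / 2) = 1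
    ∧ ∀ f : EuclideanSpace ℝ (Fin d) → ℝ, ContDiff ℝ (⊤ : ℕ∞) f →
        (∀ t, laplacian f t - (‖t‖ ^ 2 - (d : ℝ)) * f t = 0) → f 0 = 1 →
        (∃ C : ℝ, ∀ t, |f t| ≤ C) →
        Filter.Tendsto f (Filter.cocompact (EuclideanSpace ℝ (Fin d))) (nhds 0) →
        ∀ t, f t = Real.exp (-‖t‖ ^ 2 / 2) := by
  refine ⟨part1, by simp, ?_⟩
  intro f hf hpde hf0 _hbdd htend t
  rcases Nat.eq_zero_or_pos d with hd0 | hd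
  · subst hd0
    have ht : t = 0 := by ext i; exact i.elim0
    rw [ht, hf0]
    simp
  -- the main case
  have hf2 : ContDiff ℝ 2 f := hf.of_le (WithTop.coe_le_coe.mpr le_top)
  set u : EuclideanSpace ℝ (Fin d) → ℝ := fun x => f x - gauss (1/2) 0 x with hu
  have hu2 : ContDiff ℝ 2 u := hf2.sub (contDiff_gauss 2 (1/2) 0)
  have hlapu : ∀ s, laplacian u s = (‖s‖ ^ 2 - (d : ℝ)) * u s := laplacian_u hf2 hpde
  have hgauss0 : gauss (d := d) (1/2) 0 0 = 1 := by
    rw [gauss]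
    simp
  have hu0 : u 0 = 0 := by rw [hu]; dsimp only; rw [hf0, hgauss0]; ring
  have hutend : Filter.Tendsto u (Filter.cocompact (EuclideanSpace ℝ (Fin d))) (nhds 0) := by
    have h1 := htend.sub (tendsto_gauss_cocompact (by norm_num : (0:ℝ) < 1/2) 0)
    rw [hu]
    simpa using h1
  have huP : ∀ s, u s = (u s * Ex s) * gauss (1/2) 0 s := by
    intro s
    rw [mul_assoc, mul_Ex_gauss, mul_one]
  have hueq : ∀ s, u s = f s - gauss (1/2) 0 s := fun s => by rw [hu]
  clear_value u
  -- w and its properties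
  set w : EuclideanSpace ℝ (Fin d) → ℝ := fun s => u s * Ex s with hw
  have hEx2 : ContDiff ℝ 2 (Ex (d := d)) := contDiff_gauss 2 (-(1/2)) 0
  have hw2 : ContDiff ℝ 2 w := hu2.mul hEx2
  have hwcont : Continuous w := hw2.continuous
  have hLw : ∀ s, laplacian w s = 2 * fderiv ℝ w s s := by
    intro s
    rw [hw]
    rw [laplacian_mul_Ex hu2 s, fderiv_mul_Ex_self hu2 s, hlapu s]
    ring
  have hweq : ∀ s, w s = u s * Ex s := fun s => by rw [hw]
  have hw0 : w 0 = 0 := by rw [hweq 0, hu0, zero_mul]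
  clear_value w
  -- max of w on the sphere of radius d+1
  have hd1pos : (0:ℝ) < (d:ℝ) + 1 := by positivity
  have hsppt : ((d:ℝ)+1) • EuclideanSpace.single (⟨0, hd⟩ : Fin d) (1:ℝ)
      ∈ Metric.sphere (0 : EuclideanSpace ℝ (Fin d)) ((d:ℝ)+1) := by
    rw [Metric.mem_sphere, dist_zero_right, norm_smul, EuclideanSpace.norm_single,
      Real.norm_eq_abs, abs_of_pos hd1pos, norm_one, mul_one]
  obtain ⟨ts, htsS, htsmax⟩ := (isCompact_sphere (0 : EuclideanSpace ℝ (Fin d))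
    ((d:ℝ)+1)).exists_isMaxOn ⟨_, hsppt⟩ hwcont.continuousOn
  -- exterior estimate
  have hext : ∀ s : EuclideanSpace ℝ (Fin d), (d:ℝ) + 1 ≤ ‖s‖ → w s ≤ w ts := by
    have hbar := exterior_barrier hu2 hlapu hutend (w ts) ?_
    · intro s hs
      have h1 := hbar s hs
      have h2 : w s = u s * Ex s := hweq s
      have h3 : u s ≤ w ts * gauss (1/2) 0 s := h1
      have h4 : u s * Ex s ≤ w ts * gauss (1/2) 0 s * Ex s :=
        mul_le_mul_of_nonneg_right h3 (le_of_lt (Ex_pos s))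
      have h5 : w ts * gauss (1/2) 0 s * Ex s = w ts := by
        rw [mul_assoc, mul_comm (gauss (1/2) 0 s) (Ex s), mul_Ex_gauss, mul_one]
      rw [h5] at h4
      rw [h2]
      exact h4
    · intro s hs
      have hsS : s ∈ Metric.sphere (0 : EuclideanSpace ℝ (Fin d)) ((d:ℝ)+1) := by
        rw [Metric.mem_sphere, dist_zero_right, hs]
      have h1 : w s ≤ w ts := htsmax hsS
      have h2 := huP s
      rw [← hweq s] at h2
      rw [h2]
      exact mul_le_mul_of_nonneg_right h1 (le_of_lt (gauss_pos _ _ _))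
  -- max of w on the closed ball
  obtain ⟨t₁, ht₁mem, ht₁max⟩ := (isCompact_closedBall (0 : EuclideanSpace ℝ (Fin d))
    ((d:ℝ)+1)).exists_isMaxOn ⟨0, by simp [le_of_lt hd1pos]⟩ hwcont.continuousOn
  have hglob : ∀ s, w s ≤ w t₁ := by
    intro s
    rcases le_or_gt ‖s‖ ((d:ℝ)+1) with hsle | hsgt
    · exact ht₁max (by rw [Metric.mem_closedBall, dist_zero_right]; exact hsle)
    · have h1 : w s ≤ w ts := hext s (le_of_lt hsgt)
      have h2 : w ts ≤ w t₁ := by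
        refine ht₁max ?_
        rw [Metric.mem_closedBall, dist_zero_right]
        rw [Metric.mem_sphere, dist_zero_right] at htsS
        rw [htsS]
      linarith
  -- conclusion
  have hconst := strong_max_principle hd hw2 hLw hglob
  have hwt₁ : w t₁ = 0 := by rw [← hconst 0, hw0]
  have hwzero : ∀ s, w s = 0 := fun s => by rw [hconst s, hwt₁]
  have huzero : u t = 0 := by
    have h1 := hwzero t
    rw [hweq t] at h1
    have h2 := Ex_pos (d := d) t
    exact (mul_eq_zero.mp h1).resolve_right (ne_of_gt h2)
  have : f t = gauss (1/2) 0 t := by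
    rw [hueq t] at huzero
    linarith
  rw [this, psi_eq_gauss]
end
end

section
/- Let w_β(t) = (2πβ²)^{−d/2} exp(−‖t‖²/(2β²)) for fixed β > 0. Then for any points y₁, …, y_n ∈ ℝ^d, n · ∫_{ℝ^d} |n^{−1} ∑_{j=1}^n exp(i⟨t, y_j⟩) − exp(−‖t‖²/2)|² w_β(t) dt = n^{−1} ∑_{j,k=1}^n exp(−β²‖y_j − y_k‖²/2) − 2(1+β²)^{−d/2} ∑_{j=1}^n exp(−β²‖y_j‖²/(2(1+β²))) + n(1+2β²)^{−d/2}. -/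
open MeasureTheory RealInnerProductSpace
open Real

noncomputable section BHEP

def gk {d : ℕ} (a : EuclideanSpace ℝ (Fin d)) (b : ℝ) (t : EuclideanSpace ℝ (Fin d)) : ℂ :=
  Complex.exp (Complex.I * (⟪t, a⟫ : ℝ) + (-b : ℂ) * ‖t‖ ^ 2)

lemma gk_integrable {d : ℕ} (b : ℝ) (hb : 0 < b) (a : EuclideanSpace ℝ (Fin d)) :
    Integrable (gk a b) := by
  have h := GaussianFourier.integrable_cexp_neg_mul_sq_norm_add
    (b := (b : ℂ)) (by simpa using hb) Complex.I a
  unfold gk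
  convert h using 2 with t
  rw [real_inner_comm a t, add_comm]

lemma gk_integral {d : ℕ} (b : ℝ) (hb : 0 < b) (a : EuclideanSpace ℝ (Fin d)) :
    ∫ t, gk a b t
      = (((Real.pi / b) ^ ((d : ℝ) / 2) * Real.exp (-‖a‖ ^ 2 / (4 * b)) : ℝ) : ℂ) := by
  have h := GaussianFourier.integral_cexp_neg_mul_sq_norm_add
    (b := (b : ℂ)) (by simpa using hb) Complex.I a
  rw [show ∫ t, gk a b t
      = ∫ v : EuclideanSpace ℝ (Fin d), Complex.exp (-(b:ℂ) * ‖v‖ ^ 2 + Complex.I * (⟪a, v⟫ : ℝ)) by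
    congr 1 with t; rw [gk, real_inner_comm a t, add_comm]]
  rw [h, finrank_euclideanSpace_fin, Complex.I_sq]
  rw [Complex.ofReal_mul, Complex.ofReal_cpow (by positivity), Complex.ofReal_exp]
  push_cast
  ring_nf

lemma pointwise {d n : ℕ} (β : ℝ) (y : Fin n → EuclideanSpace ℝ (Fin d))
    (t : EuclideanSpace ℝ (Fin d)) :
    (((‖((n : ℂ)⁻¹ * ∑ j, Complex.exp (Complex.I * (⟪t, y j⟫ : ℝ))
          - (Real.exp (-‖t‖ ^ 2 / 2) : ℝ))‖) ^ 2
        * ((2 * Real.pi * β ^ 2) ^ (-(d : ℝ) / 2) * Real.exp (-‖t‖ ^ 2 / (2 * β ^ 2))) : ℝ) : ℂ)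
    = (((2 * Real.pi * β ^ 2) ^ (-(d : ℝ) / 2) : ℝ) : ℂ) *
        (((n : ℂ)⁻¹) ^ 2 * ∑ j, ∑ k, gk (y j - y k) (2 * β ^ 2)⁻¹ t
          - (n : ℂ)⁻¹ * (∑ j, gk (y j) (2⁻¹ + (2 * β ^ 2)⁻¹) t
              + ∑ j, gk (-(y j)) (2⁻¹ + (2 * β ^ 2)⁻¹) t)
          + gk 0 (1 + (2 * β ^ 2)⁻¹) t) := by
  have habs : ∀ z : ℂ, ((‖z‖ : ℝ) : ℂ) ^ 2 = z * (starRingEnd ℂ) z := by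
    intro z
    rw [← Complex.ofReal_pow, Complex.sq_norm, Complex.mul_conj]
  rw [Complex.ofReal_mul, Complex.ofReal_pow, habs, Complex.ofReal_mul]
  rw [show (starRingEnd ℂ) ((n : ℂ)⁻¹ * ∑ j, Complex.exp (Complex.I * (⟪t, y j⟫ : ℝ))
          - (Real.exp (-‖t‖ ^ 2 / 2) : ℝ))
      = (n : ℂ)⁻¹ * ∑ j, Complex.exp (-(Complex.I * (⟪t, y j⟫ : ℝ)))
          - (Real.exp (-‖t‖ ^ 2 / 2) : ℝ) by
    simp [map_sub, map_mul, map_sum, ← Complex.exp_conj, Complex.conj_ofReal, map_div₀,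
      map_neg, map_pow, map_ofNat]]
  have h1 : (∑ j, Complex.exp (Complex.I * (⟪t, y j⟫ : ℝ)))
        * (∑ k, Complex.exp (-(Complex.I * (⟪t, y k⟫ : ℝ))))
        * ((Real.exp (-‖t‖ ^ 2 / (2 * β ^ 2)) : ℝ) : ℂ)
      = ∑ j, ∑ k, gk (y j - y k) (2 * β ^ 2)⁻¹ t := by
    rw [Finset.sum_mul_sum]
    simp only [Finset.sum_mul]
    refine Finset.sum_congr rfl fun j _ => Finset.sum_congr rfl fun k _ => ?_
    simp only [gk, Complex.ofReal_exp, ← Complex.exp_add]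
    congr 1
    rw [inner_sub_right]
    push_cast
    ring
  have h2 : ∀ (s : ℝ), (∑ j, Complex.exp ((s : ℂ) * (Complex.I * (⟪t, y j⟫ : ℝ))))
        * ((Real.exp (-‖t‖ ^ 2 / 2) : ℝ) : ℂ)
        * ((Real.exp (-‖t‖ ^ 2 / (2 * β ^ 2)) : ℝ) : ℂ)
      = ∑ j, gk (s • y j) (2⁻¹ + (2 * β ^ 2)⁻¹) t := by
    intro s
    simp only [Finset.sum_mul]
    refine Finset.sum_congr rfl fun j _ => ?_
    simp only [gk, Complex.ofReal_exp, ← Complex.exp_add]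
    congr 1
    rw [real_inner_smul_right]
    push_cast
    ring
  have h2a := h2 1
  have h2b := h2 (-1)
  simp only [one_mul, Complex.ofReal_one, Complex.ofReal_neg, neg_one_mul, neg_smul, one_smul,
    Complex.ofReal_neg] at h2a h2b
  have h3 : ((Real.exp (-‖t‖ ^ 2 / 2) : ℝ) : ℂ) * ((Real.exp (-‖t‖ ^ 2 / 2) : ℝ) : ℂ)
        * ((Real.exp (-‖t‖ ^ 2 / (2 * β ^ 2)) : ℝ) : ℂ)
      = gk 0 (1 + (2 * β ^ 2)⁻¹) t := by
    simp only [gk, Complex.ofReal_exp, ← Complex.exp_add, inner_zero_right]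
    congr 1
    push_cast
    ring
  linear_combination (((2 * Real.pi * β ^ 2) ^ (-(d : ℝ) / 2) : ℝ) : ℂ) *
    (((n : ℂ)⁻¹) ^ 2 * h1 - (n : ℂ)⁻¹ * h2a - (n : ℂ)⁻¹ * h2b + h3)

lemma rpow_combo {d : ℕ} (β b : ℝ) (hβ : 0 < β) (hb : 0 < b) :
    (2 * Real.pi * β ^ 2) ^ (-(d : ℝ) / 2) * (Real.pi / b) ^ ((d : ℝ) / 2)
      = (2 * β ^ 2 * b) ^ (-(d : ℝ) / 2) := by
  have hπ := Real.pi_pos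
  have key : (2 * Real.pi * β ^ 2) ^ (-(d : ℝ) / 2) * (Real.pi / b) ^ ((d : ℝ) / 2)
      = ((2 * Real.pi * β ^ 2) / (Real.pi / b)) ^ (-(d : ℝ) / 2) := by
    rw [Real.div_rpow (by positivity) (by positivity : (0:ℝ) ≤ Real.pi / b), neg_div,
      Real.rpow_neg (by positivity), Real.rpow_neg (by positivity : (0:ℝ) ≤ Real.pi / b)]
    simp only [div_eq_mul_inv, inv_inv]

  rw [key]
  congr 1
  field_simp

/-- Closed-form representation of the BHEP statistic: for any `y₁, …, y_n ∈ ℝ^d` and `β > 0`,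
`n ∫ |n⁻¹ ∑_j exp(i⟨t,y_j⟩) − exp(−‖t‖²/2)|² w_β(t) dt` equals the stated triple-sum
expression, with `w_β(t) = (2πβ²)^{−d/2} exp(−‖t‖²/(2β²))`. -/
theorem stmt5 {d n : ℕ} (β : ℝ) (hβ : 0 < β) (y : Fin n → EuclideanSpace ℝ (Fin d)) :
    (n : ℝ) * ∫ t : EuclideanSpace ℝ (Fin d),
        (‖((n : ℂ)⁻¹ * ∑ j, Complex.exp (Complex.I * (⟪t, y j⟫ : ℝ))
            - (Real.exp (-‖t‖ ^ 2 / 2) : ℝ))‖) ^ 2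
          * ((2 * Real.pi * β ^ 2) ^ (-(d : ℝ) / 2) * Real.exp (-‖t‖ ^ 2 / (2 * β ^ 2)))
      = (n : ℝ)⁻¹ * ∑ j, ∑ k, Real.exp (-β ^ 2 * ‖y j - y k‖ ^ 2 / 2)
        - 2 * (1 + β ^ 2) ^ (-(d : ℝ) / 2)
            * ∑ j, Real.exp (-β ^ 2 * ‖y j‖ ^ 2 / (2 * (1 + β ^ 2)))
        + (n : ℝ) * (1 + 2 * β ^ 2) ^ (-(d : ℝ) / 2) := by
  

  rcases Nat.eq_zero_or_pos n with hn0 | hn0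
  · subst hn0; simp
  have hn' : (n : ℝ) ≠ 0 := Nat.cast_ne_zero.mpr hn0.ne'
  have hb1 : (0:ℝ) < (2 * β ^ 2)⁻¹ := by positivity
  have hb2 : (0:ℝ) < 2⁻¹ + (2 * β ^ 2)⁻¹ := by positivity
  have hb3 : (0:ℝ) < 1 + (2 * β ^ 2)⁻¹ := by positivity
  have int1 : Integrable (fun t : EuclideanSpace ℝ (Fin d) =>
      ∑ j, ∑ k, gk (y j - y k) (2 * β ^ 2)⁻¹ t) :=
    integrable_finset_sum _ fun j _ =>
      integrable_finset_sum _ fun k _ => gk_integrable _ hb1 _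
  have int2 : Integrable (fun t : EuclideanSpace ℝ (Fin d) =>
      ∑ j, gk (y j) (2⁻¹ + (2 * β ^ 2)⁻¹) t) :=
    integrable_finset_sum _ fun j _ => gk_integrable _ hb2 _
  have int2' : Integrable (fun t : EuclideanSpace ℝ (Fin d) =>
      ∑ j, gk (-(y j)) (2⁻¹ + (2 * β ^ 2)⁻¹) t) :=
    integrable_finset_sum _ fun j _ => gk_integrable _ hb2 _
  have int3 : Integrable (gk (0 : EuclideanSpace ℝ (Fin d)) (1 + (2 * β ^ 2)⁻¹)) :=
    gk_integrable _ hb3 _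
  have intG : Integrable (fun t : EuclideanSpace ℝ (Fin d) =>
      (((2 * Real.pi * β ^ 2) ^ (-(d : ℝ) / 2) : ℝ) : ℂ) *
        (((n : ℂ)⁻¹) ^ 2 * ∑ j, ∑ k, gk (y j - y k) (2 * β ^ 2)⁻¹ t
          - (n : ℂ)⁻¹ * (∑ j, gk (y j) (2⁻¹ + (2 * β ^ 2)⁻¹) t
              + ∑ j, gk (-(y j)) (2⁻¹ + (2 * β ^ 2)⁻¹) t)
          + gk 0 (1 + (2 * β ^ 2)⁻¹) t)) :=
    (((int1.const_mul _).sub ((int2.add int2').const_mul _)).add int3).const_mul _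
  have step1 : (∫ t : EuclideanSpace ℝ (Fin d),
        (‖((n : ℂ)⁻¹ * ∑ j, Complex.exp (Complex.I * (⟪t, y j⟫ : ℝ))
            - (Real.exp (-‖t‖ ^ 2 / 2) : ℝ))‖) ^ 2
          * ((2 * Real.pi * β ^ 2) ^ (-(d : ℝ) / 2) * Real.exp (-‖t‖ ^ 2 / (2 * β ^ 2))))
      = (∫ t : EuclideanSpace ℝ (Fin d),
          (((2 * Real.pi * β ^ 2) ^ (-(d : ℝ) / 2) : ℝ) : ℂ) *
            (((n : ℂ)⁻¹) ^ 2 * ∑ j, ∑ k, gk (y j - y k) (2 * β ^ 2)⁻¹ t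
              - (n : ℂ)⁻¹ * (∑ j, gk (y j) (2⁻¹ + (2 * β ^ 2)⁻¹) t
                  + ∑ j, gk (-(y j)) (2⁻¹ + (2 * β ^ 2)⁻¹) t)
              + gk 0 (1 + (2 * β ^ 2)⁻¹) t)).re := by
    rw [show (∫ t : EuclideanSpace ℝ (Fin d),
          (((2 * Real.pi * β ^ 2) ^ (-(d : ℝ) / 2) : ℝ) : ℂ) *
            (((n : ℂ)⁻¹) ^ 2 * ∑ j, ∑ k, gk (y j - y k) (2 * β ^ 2)⁻¹ t
              - (n : ℂ)⁻¹ * (∑ j, gk (y j) (2⁻¹ + (2 * β ^ 2)⁻¹) t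
                  + ∑ j, gk (-(y j)) (2⁻¹ + (2 * β ^ 2)⁻¹) t)
              + gk 0 (1 + (2 * β ^ 2)⁻¹) t)).re
        = RCLike.re (∫ t : EuclideanSpace ℝ (Fin d),
          (((2 * Real.pi * β ^ 2) ^ (-(d : ℝ) / 2) : ℝ) : ℂ) *
            (((n : ℂ)⁻¹) ^ 2 * ∑ j, ∑ k, gk (y j - y k) (2 * β ^ 2)⁻¹ t
              - (n : ℂ)⁻¹ * (∑ j, gk (y j) (2⁻¹ + (2 * β ^ 2)⁻¹) t
                  + ∑ j, gk (-(y j)) (2⁻¹ + (2 * β ^ 2)⁻¹) t)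
              + gk 0 (1 + (2 * β ^ 2)⁻¹) t))
      from (congrFun RCLike.re_eq_complex_re _).symm]
    rw [← integral_re intG]
    refine integral_congr_ae (Filter.Eventually.of_forall fun t => ?_)
    beta_reduce
    rw [congrFun RCLike.re_eq_complex_re]
    have h2 := congrArg Complex.re (pointwise β y t)
    rwa [Complex.ofReal_re] at h2
  have J1 : ∫ t : EuclideanSpace ℝ (Fin d), ∑ j, ∑ k, gk (y j - y k) (2 * β ^ 2)⁻¹ t
      = ((∑ j, ∑ k, ((Real.pi / (2 * β ^ 2)⁻¹) ^ ((d : ℝ) / 2)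
          * Real.exp (-‖y j - y k‖ ^ 2 / (4 * (2 * β ^ 2)⁻¹))) : ℝ) : ℂ) := by
    rw [integral_finset_sum _ fun j _ =>
      integrable_finset_sum _ fun k _ => gk_integrable _ hb1 _]
    push_cast
    refine Finset.sum_congr rfl fun j _ => ?_
    rw [integral_finset_sum _ fun k _ => gk_integrable _ hb1 _]
    push_cast
    exact Finset.sum_congr rfl fun k _ => by rw [gk_integral _ hb1]; push_cast; ring
  have J2 : ∀ y' : Fin n → EuclideanSpace ℝ (Fin d),
      ∫ t : EuclideanSpace ℝ (Fin d), ∑ j, gk (y' j) (2⁻¹ + (2 * β ^ 2)⁻¹) t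
      = ((∑ j, ((Real.pi / (2⁻¹ + (2 * β ^ 2)⁻¹)) ^ ((d : ℝ) / 2)
          * Real.exp (-‖y' j‖ ^ 2 / (4 * (2⁻¹ + (2 * β ^ 2)⁻¹)))) : ℝ) : ℂ) := by
    intro y'
    rw [integral_finset_sum _ fun j _ => gk_integrable _ hb2 _]
    push_cast
    exact Finset.sum_congr rfl fun j _ => by rw [gk_integral _ hb2]; push_cast; ring
  have J3 : ∫ t : EuclideanSpace ℝ (Fin d), gk (0 : EuclideanSpace ℝ (Fin d)) (1 + (2 * β ^ 2)⁻¹) t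
      = (((Real.pi / (1 + (2 * β ^ 2)⁻¹)) ^ ((d : ℝ) / 2) : ℝ) : ℂ) := by
    rw [gk_integral _ hb3]
    simp
  have step2 : (∫ t : EuclideanSpace ℝ (Fin d),
        (((2 * Real.pi * β ^ 2) ^ (-(d : ℝ) / 2) : ℝ) : ℂ) *
          (((n : ℂ)⁻¹) ^ 2 * ∑ j, ∑ k, gk (y j - y k) (2 * β ^ 2)⁻¹ t
            - (n : ℂ)⁻¹ * (∑ j, gk (y j) (2⁻¹ + (2 * β ^ 2)⁻¹) t
                + ∑ j, gk (-(y j)) (2⁻¹ + (2 * β ^ 2)⁻¹) t)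
            + gk 0 (1 + (2 * β ^ 2)⁻¹) t))
      = (((2 * Real.pi * β ^ 2) ^ (-(d : ℝ) / 2) *
          ((n : ℝ)⁻¹ ^ 2 * ∑ j, ∑ k, ((Real.pi / (2 * β ^ 2)⁻¹) ^ ((d : ℝ) / 2)
              * Real.exp (-‖y j - y k‖ ^ 2 / (4 * (2 * β ^ 2)⁻¹)))
            - (n : ℝ)⁻¹ * ((∑ j, ((Real.pi / (2⁻¹ + (2 * β ^ 2)⁻¹)) ^ ((d : ℝ) / 2)
                  * Real.exp (-‖y j‖ ^ 2 / (4 * (2⁻¹ + (2 * β ^ 2)⁻¹)))))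
                + ∑ j, ((Real.pi / (2⁻¹ + (2 * β ^ 2)⁻¹)) ^ ((d : ℝ) / 2)
                  * Real.exp (-‖-(y j)‖ ^ 2 / (4 * (2⁻¹ + (2 * β ^ 2)⁻¹)))))
            + (Real.pi / (1 + (2 * β ^ 2)⁻¹)) ^ ((d : ℝ) / 2)) : ℝ) : ℂ) := by
    have intA : Integrable (fun t : EuclideanSpace ℝ (Fin d) =>
        ((n : ℂ)⁻¹) ^ 2 * ∑ j, ∑ k, gk (y j - y k) (2 * β ^ 2)⁻¹ t) := int1.const_mul _
    have intB : Integrable (fun t : EuclideanSpace ℝ (Fin d) =>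
        (n : ℂ)⁻¹ * (∑ j, gk (y j) (2⁻¹ + (2 * β ^ 2)⁻¹) t
          + ∑ j, gk (-(y j)) (2⁻¹ + (2 * β ^ 2)⁻¹) t)) := (int2.add int2').const_mul _
    have intAB : Integrable (fun t : EuclideanSpace ℝ (Fin d) =>
        ((n : ℂ)⁻¹) ^ 2 * ∑ j, ∑ k, gk (y j - y k) (2 * β ^ 2)⁻¹ t
          - (n : ℂ)⁻¹ * (∑ j, gk (y j) (2⁻¹ + (2 * β ^ 2)⁻¹) t
              + ∑ j, gk (-(y j)) (2⁻¹ + (2 * β ^ 2)⁻¹) t)) := intA.sub intB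
    rw [integral_const_mul, integral_add intAB int3, integral_sub intA intB,
      integral_const_mul, integral_const_mul,
      integral_add int2 int2', J1, J2 y, J2 (fun j => -(y j)), J3]
    push_cast
    ring
  rw [step1, step2, Complex.ofReal_re]
  have harg1 : ∀ x : ℝ, -x / (4 * (2 * β ^ 2)⁻¹) = -β ^ 2 * x / 2 := by
    intro x; field_simp; ring
  have harg2 : ∀ x : ℝ, -x / (4 * (2⁻¹ + (2 * β ^ 2)⁻¹)) = -β ^ 2 * x / (2 * (1 + β ^ 2)) := by
    intro x
    have h1β : (0:ℝ) < 1 + β ^ 2 := by positivity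
    field_simp
    ring
  simp only [harg1, harg2, norm_neg]
  simp only [← Finset.mul_sum]
  have hw1 : (2 * Real.pi * β ^ 2) ^ (-(d : ℝ) / 2) * (Real.pi / (2 * β ^ 2)⁻¹) ^ ((d : ℝ) / 2)
      = 1 := by
    rw [rpow_combo β _ hβ hb1, show 2 * β ^ 2 * (2 * β ^ 2)⁻¹ = 1 by field_simp,
      Real.one_rpow]
  have hw2 : (2 * Real.pi * β ^ 2) ^ (-(d : ℝ) / 2)
        * (Real.pi / (2⁻¹ + (2 * β ^ 2)⁻¹)) ^ ((d : ℝ) / 2)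
      = (1 + β ^ 2) ^ (-(d : ℝ) / 2) := by
    rw [rpow_combo β _ hβ hb2, show 2 * β ^ 2 * (2⁻¹ + (2 * β ^ 2)⁻¹) = 1 + β ^ 2 by
      field_simp; ring]
  have hw3 : (2 * Real.pi * β ^ 2) ^ (-(d : ℝ) / 2)
        * (Real.pi / (1 + (2 * β ^ 2)⁻¹)) ^ ((d : ℝ) / 2)
      = (1 + 2 * β ^ 2) ^ (-(d : ℝ) / 2) := by
    rw [rpow_combo β _ hβ hb3, show 2 * β ^ 2 * (1 + (2 * β ^ 2)⁻¹) = 1 + 2 * β ^ 2 by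
      field_simp; ring]
  have hnn : (n : ℝ) * ((n : ℝ)⁻¹) ^ 2 = (n : ℝ)⁻¹ := by field_simp
  have hn1 : (n : ℝ) * (n : ℝ)⁻¹ = 1 := by field_simp
  linear_combination
    ((n : ℝ) * ((n : ℝ)⁻¹) ^ 2 * ∑ j, ∑ k, Real.exp (-β ^ 2 * ‖y j - y k‖ ^ 2 / 2)) * hw1
    + (∑ j, ∑ k, Real.exp (-β ^ 2 * ‖y j - y k‖ ^ 2 / 2)) * hnn
    - (2 * (n : ℝ) * (n : ℝ)⁻¹ * ∑ j, Real.exp (-β ^ 2 * ‖y j‖ ^ 2 / (2 * (1 + β ^ 2)))) * hw2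
    - (2 * (∑ j, Real.exp (-β ^ 2 * ‖y j‖ ^ 2 / (2 * (1 + β ^ 2))))
        * (1 + β ^ 2) ^ (-(d : ℝ) / 2)) * hn1
    + (n : ℝ) * hw3
end BHEP
end

section
/- Let X, X₁, X₂, … be i.i.d. ℝ^d-valued random vectors with E‖X‖⁴ < ∞, E X = 0 and E[XXᵀ] = I_d. Let S_n = n^{−1}∑_{j=1}^n (X_j − X̄_n)(X_j − X̄_n)ᵀ (assumed a.s. invertible for large n), Y_{n,j} = S_n^{−1/2}(X_j − X̄_n), and Δ_{n,j} = Y_{n,j} − X_j. Then n^{−1} ∑_{j=1}^n ‖Δ_{n,j}‖² → 0 almost surely as n → ∞. -/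
open MeasureTheory ProbabilityTheory Filter

/-- The positive semidefinite square root of a positive semidefinite matrix
(the definition Mathlib had as `Matrix.PosSemidef.sqrt` in December 2024). -/
noncomputable def Matrix.PosSemidef.sqrt {n : Type*} [Fintype n] [DecidableEq n] {𝕜 : Type*}
    [RCLike 𝕜] [PartialOrder 𝕜] {A : Matrix n n 𝕜} (hA : A.PosSemidef) : Matrix n n 𝕜 :=
  hA.1.eigenvectorUnitary.1 * Matrix.diagonal ((↑) ∘ (Real.sqrt ·) ∘ hA.1.eigenvalues) *
    (star hA.1.eigenvectorUnitary : Matrix n n 𝕜)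

section Stmt13Aux

open Matrix Finset

open Matrix Finset

variable {d : ℕ}

section conj

variable {U : Matrix (Fin d) (Fin d) ℝ}

lemma conj_conj (hU : U ∈ Matrix.unitaryGroup (Fin d) ℝ) (f g : Fin d → ℝ) :
    (U * diagonal f * star U) * (U * diagonal g * star U)
      = U * diagonal (fun i => f i * g i) * star U := by
  have h1 : star U * U = 1 := Matrix.mem_unitaryGroup_iff'.mp hU
  calc (U * diagonal f * star U) * (U * diagonal g * star U)
      = U * (diagonal f * (star U * U) * diagonal g) * star U := by
        simp only [Matrix.mul_assoc]
    _ = U * diagonal (fun i => f i * g i) * star U := by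
        rw [h1, Matrix.mul_one, diagonal_mul_diagonal]

lemma conj_one (hU : U ∈ Matrix.unitaryGroup (Fin d) ℝ) :
    U * diagonal (fun _ => (1:ℝ)) * star U = 1 := by
  have h2 : U * star U = 1 := Matrix.mem_unitaryGroup_iff.mp hU
  rw [show (diagonal (fun _ => (1:ℝ)) : Matrix (Fin d) (Fin d) ℝ) = 1 from diagonal_one,
    Matrix.mul_one, h2]

lemma conj_sub (f g : Fin d → ℝ) :
    (U * diagonal f * star U) - (U * diagonal g * star U)
      = U * diagonal (fun i => f i - g i) * star U := by
  rw [← Matrix.sub_mul, ← Matrix.mul_sub, diagonal_sub]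

lemma conj_trace (hU : U ∈ Matrix.unitaryGroup (Fin d) ℝ) (f : Fin d → ℝ) :
    (U * diagonal f * star U).trace = ∑ i, f i := by
  have h1 : star U * U = 1 := Matrix.mem_unitaryGroup_iff'.mp hU
  rw [Matrix.trace_mul_comm, ← Matrix.mul_assoc, h1, Matrix.one_mul, Matrix.trace_diagonal]

lemma conj_transpose_self (f : Fin d → ℝ) :
    (U * diagonal f * star U)ᴴ = U * diagonal f * star U := by
  simp [Matrix.conjTranspose_mul, Matrix.mul_assoc, diagonal_conjTranspose,
    Matrix.star_eq_conjTranspose, Matrix.conjTranspose_eq_transpose_of_trivial,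
    Matrix.transpose_transpose]

end conj

lemma key {S : Matrix (Fin d) (Fin d) ℝ} (hS : S.PosSemidef)
    (hF : ∑ k, ∑ l, (S k l - (1 : Matrix (Fin d) (Fin d) ℝ) k l)^2 ≤ 1/4) (x : Fin d → ℝ) :
    ∑ k, ((hS.sqrt)⁻¹.mulVec x k - x k)^2
      ≤ 2 * (∑ k, ∑ l, (S k l - (1 : Matrix (Fin d) (Fin d) ℝ) k l)^2) * ∑ k, (x k)^2 := by
  classical
  set F := ∑ k, ∑ l, (S k l - (1 : Matrix (Fin d) (Fin d) ℝ) k l)^2 with hFdef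
  have hH := hS.1
  set U : Matrix (Fin d) (Fin d) ℝ := (hH.eigenvectorUnitary : Matrix (Fin d) (Fin d) ℝ) with hUdef
  have hU : U ∈ Matrix.unitaryGroup (Fin d) ℝ := hH.eigenvectorUnitary.2
  set lam : Fin d → ℝ := hH.eigenvalues with hlamdef
  have hspec : S = U * diagonal lam * star U := by
    have := hH.spectral_theorem
    rwa [show (RCLike.ofReal ∘ lam : Fin d → ℝ) = lam by
      funext i; simp [RCLike.ofReal_real_eq_id]] at this
  have hsqrt : hS.sqrt = U * diagonal (fun i => Real.sqrt (lam i)) * star U := by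
    rw [Matrix.PosSemidef.sqrt]
    congr 1
  -- the matrix S - 1 as a conjugation
  have hsub : S - 1 = U * diagonal (fun i => lam i - 1) * star U := by
    rw [hspec, ← conj_one hU, conj_sub]
  -- trace identity
  have htr : ∑ i, (lam i - 1)^2 = F := by
    have h1 : ((S-1) * (S-1)).trace = ∑ i, (lam i - 1)^2 := by
      rw [hsub, conj_conj hU, conj_trace hU]
      simp [pow_two]
    have hsymm : ∀ k l, (S - 1) k l = (S - 1) l k := by
      intro k l
      have h2 : (S - 1).IsHermitian := hH.sub isHermitian_one
      have := h2.apply l k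
      simpa using this
    rw [← h1]
    rw [Matrix.trace]
    simp only [Matrix.diag, Matrix.mul_apply]
    rw [hFdef]
    apply Finset.sum_congr rfl
    intro k _
    apply Finset.sum_congr rfl
    intro l _
    rw [show S k l - (1 : Matrix (Fin d) (Fin d) ℝ) k l = (S - 1) k l by simp [Matrix.sub_apply]]
    rw [pow_two]
    rw [hsymm k l]
  have hFnn : (0:ℝ) ≤ F := by
    rw [hFdef]; positivity
  have heig : ∀ i, (lam i - 1)^2 ≤ F := by
    intro i
    rw [← htr]
    exact Finset.single_le_sum (f := fun j => (lam j - 1)^2) (fun j _ => sq_nonneg _) (Finset.mem_univ i)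
  have hllow : ∀ i, (1:ℝ)/2 ≤ lam i := by
    intro i
    have := heig i
    nlinarith [hF]
  have hlpos : ∀ i, (0:ℝ) < lam i := fun i => lt_of_lt_of_le (by norm_num) (hllow i)
  have hspos : ∀ i, (0:ℝ) < Real.sqrt (lam i) := fun i => Real.sqrt_pos.mpr (hlpos i)
  set mu' : Fin d → ℝ := fun i => (Real.sqrt (lam i))⁻¹ with hmu'def
  have hBinv : (hS.sqrt)⁻¹ = U * diagonal mu' * star U := by
    apply Matrix.inv_eq_right_inv
    rw [hsqrt, conj_conj hU]
    rw [show (fun i => Real.sqrt (lam i) * mu' i) = fun _ => (1:ℝ) from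
      funext fun i => mul_inv_cancel₀ (hspos i).ne']
    exact conj_one hU
  have hB1 : (hS.sqrt)⁻¹ - 1 = U * diagonal (fun i => mu' i - 1) * star U := by
    rw [hBinv, ← conj_one hU, conj_sub]
  have hmu : ∀ i, (mu' i - 1)^2 ≤ 2 * F := by
    intro i
    have h1 := heig i
    have h2 := hllow i
    have hs := hspos i
    have hsq : Real.sqrt (lam i) ^ 2 = lam i := Real.sq_sqrt (hlpos i).le
    have hinv : Real.sqrt (lam i) * (Real.sqrt (lam i))⁻¹ = 1 := mul_inv_cancel₀ hs.ne'
    have hmueq : (mu' i - 1) * Real.sqrt (lam i) = 1 - Real.sqrt (lam i) := by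
      rw [hmu'def]; field_simp
    nlinarith [sq_nonneg (1 - Real.sqrt (lam i)), sq_nonneg (mu' i - 1),
      sq_nonneg ((mu' i - 1) * Real.sqrt (lam i)), hs, hsq, hmueq,
      mul_pos hs hs, sq_nonneg (Real.sqrt (lam i))]
  set C : Matrix (Fin d) (Fin d) ℝ := U * diagonal (fun i => mu' i - 1) * star U with hCdef
  have hCsymm : Cᵀ = C := by
    have h := conj_transpose_self (U := U) (fun i => mu' i - 1)
    rw [Matrix.conjTranspose_eq_transpose_of_trivial] at h
    exact h
  have hquad : x ⬝ᵥ ((U * diagonal (fun i => (mu' i - 1) * (mu' i - 1)) * star U) *ᵥ x)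
      = (C *ᵥ x) ⬝ᵥ (C *ᵥ x) := by
    rw [← conj_conj hU, ← hCdef, ← Matrix.mulVec_mulVec, Matrix.dotProduct_mulVec,
      show x ᵥ* C = C *ᵥ x from by conv_lhs => rw [← hCsymm, Matrix.vecMul_transpose]]
  have hdiagpsd : (diagonal (fun i => 2 * F - (mu' i - 1) * (mu' i - 1))).PosSemidef :=
    posSemidef_diagonal_iff.mpr (fun i => by nlinarith [hmu i])
  have hpos := (hdiagpsd.mul_mul_conjTranspose_same U).dotProduct_mulVec_nonneg x
  rw [← Matrix.star_eq_conjTranspose] at hpos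
  have h1 : U * diagonal (fun _ : Fin d => 2 * F) * star U
      = (2 * F) • (1 : Matrix (Fin d) (Fin d) ℝ) := by
    have h2 : (diagonal (fun _ : Fin d => 2 * F))
        = (2 * F) • (diagonal (fun _ : Fin d => (1:ℝ))) := by
      ext i j
      by_cases h : i = j <;>
        simp [Matrix.diagonal_apply, Matrix.smul_apply, Matrix.one_apply, h]
    rw [h2, Matrix.mul_smul, Matrix.smul_mul, conj_one hU]
  have hsplit : U * diagonal (fun i => 2 * F - (mu' i - 1) * (mu' i - 1)) * star U
      = (2 * F) • (1 : Matrix (Fin d) (Fin d) ℝ)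
        - U * diagonal (fun i => (mu' i - 1) * (mu' i - 1)) * star U := by
    rw [← h1, conj_sub]
  rw [hsplit] at hpos
  rw [Matrix.sub_mulVec, dotProduct_sub, Matrix.smul_mulVec,
    Matrix.one_mulVec, dotProduct_smul] at hpos
  simp only [star_trivial] at hpos
  rw [hquad] at hpos
  have hLHS : ∑ k, ((hS.sqrt)⁻¹.mulVec x k - x k)^2 = (C *ᵥ x) ⬝ᵥ (C *ᵥ x) := by
    have hv : C *ᵥ x = (hS.sqrt)⁻¹ *ᵥ x - x := by
      rw [← hB1, Matrix.sub_mulVec, Matrix.one_mulVec]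
    rw [hv, dotProduct]
    exact Finset.sum_congr rfl fun k _ => by rw [Pi.sub_apply, pow_two]
  have hxx : x ⬝ᵥ x = ∑ k, (x k)^2 := by
    rw [dotProduct]
    exact Finset.sum_congr rfl (fun k _ => (pow_two _).symm)
  rw [hLHS]
  rw [smul_eq_mul, hxx] at hpos
  linarith

lemma sq_sum_sub_le (a b : Fin d → ℝ) :
    ∑ k, (a k - b k)^2 ≤ 2 * ∑ k, (a k)^2 + 2 * ∑ k, (b k)^2 := by
  rw [Finset.mul_sum, Finset.mul_sum, ← Finset.sum_add_distrib]
  exact Finset.sum_le_sum fun k _ => by nlinarith [sq_nonneg (a k + b k)]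

lemma abs_le_one_add_sq (x : ℝ) : |x| ≤ 1 + x^2 := by
  nlinarith [sq_nonneg (|x| - 1), abs_nonneg x, sq_abs x]

end Stmt13Aux

/-- Proposition 2.1 (in part): for i.i.d. standardized random vectors with `E‖X‖⁴ < ∞`,
the average of the squared Euclidean norms of `Δ_{n,j} = Y_{n,j} − X_j`
(where `Y_{n,j} = S_n^{-1/2}(X_j − X̄_n)` are the scaled residuals) tends to `0`
almost surely. -/
theorem stmt13 {d : ℕ} {Ω : Type*} [MeasureSpace Ω] [IsProbabilityMeasure (ℙ : Measure Ω)]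
    (X : ℕ → Ω → Fin d → ℝ)
    (hmeas : ∀ i, Measurable (X i))
    (hindep : iIndepFun X ℙ)
    (hident : ∀ i, Measure.map (X i) ℙ = Measure.map (X 0) ℙ)
    (hmom : Integrable (fun ω => (∑ k, (X 0 ω k) ^ 2) ^ 2) ℙ)
    (hmean : ∫ ω, X 0 ω ∂ℙ = 0)
    (hcov : ∀ k l, ∫ ω, X 0 ω k * X 0 ω l ∂ℙ = if k = l then (1 : ℝ) else 0)
    (S : ℕ → Ω → Matrix (Fin d) (Fin d) ℝ)
    (hS : ∀ n ω, S n ω = (n : ℝ)⁻¹ • ∑ j ∈ Finset.range n,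
        Matrix.vecMulVec (X j ω - (n : ℝ)⁻¹ • ∑ i ∈ Finset.range n, X i ω)
                         (X j ω - (n : ℝ)⁻¹ • ∑ i ∈ Finset.range n, X i ω))
    (hpsd : ∀ n ω, (S n ω).PosSemidef) :
    ∀ᵐ ω ∂ℙ, Tendsto (fun n : ℕ => (n : ℝ)⁻¹ * ∑ j ∈ Finset.range n, ∑ k,
        ((((hpsd n ω).sqrt)⁻¹.mulVec
            (X j ω - (n : ℝ)⁻¹ • ∑ i ∈ Finset.range n, X i ω) k) - X j ω k) ^ 2)
      atTop (nhds 0) := by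
  classical
  -- measurability of components
  have hmk : ∀ i k, Measurable fun ω => X i ω k :=
    fun i k => (measurable_pi_apply k).comp (hmeas i)
  have hsqmeas : Measurable fun ω => ∑ k, (X 0 ω k)^2 :=
    Finset.measurable_sum _ fun k _ => (hmk 0 k).pow_const 2
  -- bound for integrability
  have hGint : Integrable (fun ω => 1 + (∑ k, (X 0 ω k)^2)^2) ℙ :=
    (integrable_const (1:ℝ)).add hmom
  have hsq_le : ∀ (v : Fin d → ℝ) k, (v k)^2 ≤ ∑ l, (v l)^2 :=
    fun v k => Finset.single_le_sum (f := fun l => (v l)^2)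
      (fun l _ => sq_nonneg _) (Finset.mem_univ k)
  -- integrability of products of two coordinates
  have h2int : ∀ k l, Integrable (fun ω => X 0 ω k * X 0 ω l) ℙ := by
    intro k l
    apply hGint.mono' (((hmk 0 k).mul (hmk 0 l)).aestronglyMeasurable)
    filter_upwards with ω
    have h1 := hsq_le (X 0 ω) k
    have h2 := hsq_le (X 0 ω) l
    have h3 : (X 0 ω k * X 0 ω l)^2 ≤ (∑ m, (X 0 ω m)^2)^2 := by
      have hnn : (0:ℝ) ≤ ∑ m, (X 0 ω m)^2 := Finset.sum_nonneg fun m _ => sq_nonneg _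
      nlinarith [sq_nonneg (X 0 ω k), sq_nonneg (X 0 ω l)]
    calc ‖X 0 ω k * X 0 ω l‖ = |X 0 ω k * X 0 ω l| := rfl
      _ ≤ 1 + (X 0 ω k * X 0 ω l)^2 := abs_le_one_add_sq _
      _ ≤ 1 + (∑ m, (X 0 ω m)^2)^2 := by linarith
  -- integrability of the sum of squares
  have hsqint : Integrable (fun ω => ∑ k, (X 0 ω k)^2) ℙ := by
    apply hGint.mono' hsqmeas.aestronglyMeasurable
    filter_upwards with ω
    have hnn : (0:ℝ) ≤ ∑ m, (X 0 ω m)^2 := Finset.sum_nonneg fun m _ => sq_nonneg _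
    rw [Real.norm_eq_abs, abs_of_nonneg hnn]
    nlinarith
  -- integrability of X 0 as a vector
  have hX0int : Integrable (X 0) ℙ := by
    apply Integrable.mono' (g := fun ω => (d:ℝ) + 1 + (∑ k, (X 0 ω k)^2)^2)
      ((integrable_const _).add hmom) (hmeas 0).aestronglyMeasurable
    filter_upwards with ω
    rw [pi_norm_le_iff_of_nonneg]
    · intro k
      have h1 := hsq_le (X 0 ω) k
      have h2 : (∑ m, (X 0 ω m)^2) ≤ 1 + (∑ m, (X 0 ω m)^2)^2 := by
        nlinarith [Finset.sum_nonneg (fun m (_ : m ∈ Finset.univ) => sq_nonneg (X 0 ω m))]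
      calc ‖X 0 ω k‖ = |X 0 ω k| := rfl
        _ ≤ 1 + (X 0 ω k)^2 := abs_le_one_add_sq _
        _ ≤ (d:ℝ) + 1 + (∑ m, (X 0 ω m)^2)^2 := by
            have hd : (1:ℝ) ≤ (d:ℝ) := by
              exact_mod_cast Nat.one_le_iff_ne_zero.mpr (Nat.pos_iff_ne_zero.mp k.pos)
            linarith
    · have h2 : (0:ℝ) ≤ (∑ m, (X 0 ω m)^2)^2 := sq_nonneg _
      positivity
  -- identical distribution of compositions
  have hid : ∀ i, IdentDistrib (X i) (X 0) ℙ ℙ :=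
    fun i => ⟨(hmeas i).aemeasurable, (hmeas 0).aemeasurable, hident i⟩
  -- mean of each coordinate is zero
  have hmean_k : ∀ k, ∫ ω, X 0 ω k ∂ℙ = 0 := by
    intro k
    have := (ContinuousLinearMap.proj (R := ℝ) (φ := fun _ : Fin d => ℝ) k).integral_comp_comm hX0int
    simp only [ContinuousLinearMap.proj_apply] at this
    rw [this, hmean]
    rfl
  -- mean of the sum of squares is d
  have hmean_sq : ∫ ω, (∑ k, (X 0 ω k)^2) ∂ℙ = (d:ℝ) := by
    rw [integral_finset_sum _ (fun k _ => by
      simpa [pow_two] using h2int k k)]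
    have : ∀ k : Fin d, ∫ ω, (X 0 ω k)^2 ∂ℙ = 1 := by
      intro k
      simp_rw [pow_two]
      simpa using hcov k k
    simp [this]
  -- Strong law of large numbers, applied to products of coordinates
  have hSLLN2 : ∀ k l : Fin d, ∀ᵐ ω ∂ℙ, Tendsto
      (fun n : ℕ => (∑ j ∈ Finset.range n, X j ω k * X j ω l) / n) atTop
      (nhds (if k = l then (1:ℝ) else 0)) := by
    intro k l
    have hg : Measurable fun v : Fin d → ℝ => v k * v l :=
      (measurable_pi_apply k).mul (measurable_pi_apply l)
    have h := strong_law_ae_real (fun i => (fun v : Fin d → ℝ => v k * v l) ∘ X i)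
      (by exact h2int k l)
      (fun i j hij => (hindep.indepFun hij).comp hg hg)
      (fun i => (hid i).comp hg)
    rw [show ∫ ω, ((fun v : Fin d → ℝ => v k * v l) ∘ X 0) ω ∂ℙ
        = (if k = l then (1:ℝ) else 0) from by
      simpa [Function.comp] using hcov k l] at h
    simpa [Function.comp] using h
  -- SLLN for coordinates
  have hSLLN1 : ∀ k : Fin d, ∀ᵐ ω ∂ℙ, Tendsto
      (fun n : ℕ => (∑ j ∈ Finset.range n, X j ω k) / n) atTop (nhds (0:ℝ)) := by
    intro k
    have hg : Measurable fun v : Fin d → ℝ => v k := measurable_pi_apply k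
    have hint : Integrable (fun ω => X 0 ω k) ℙ := by
      apply Integrable.mono' ((integrable_const (2:ℝ)).add hmom) (hmk 0 k).aestronglyMeasurable
      filter_upwards with ω
      have h1 := hsq_le (X 0 ω) k
      calc ‖X 0 ω k‖ = |X 0 ω k| := rfl
        _ ≤ 1 + (X 0 ω k)^2 := abs_le_one_add_sq _
        _ ≤ 2 + (∑ m, (X 0 ω m)^2)^2 := by
            have hnn : (0:ℝ) ≤ ∑ m, (X 0 ω m)^2 :=
              Finset.sum_nonneg fun m _ => sq_nonneg _
            nlinarith
    have h := strong_law_ae_real (fun i => (fun v : Fin d → ℝ => v k) ∘ X i)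
      (by exact hint)
      (fun i j hij => (hindep.indepFun hij).comp hg hg)
      (fun i => (hid i).comp hg)
    rw [show ∫ ω, ((fun v : Fin d → ℝ => v k) ∘ X 0) ω ∂ℙ = (0:ℝ) from by
      simpa [Function.comp] using hmean_k k] at h
    simpa [Function.comp] using h
  -- SLLN for the sum of squares
  have hSLLN3 : ∀ᵐ ω ∂ℙ, Tendsto
      (fun n : ℕ => (∑ j ∈ Finset.range n, ∑ k, (X j ω k)^2) / n) atTop (nhds (d:ℝ)) := by
    have hg : Measurable fun v : Fin d → ℝ => ∑ k, (v k)^2 :=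
      Finset.measurable_sum _ fun k _ => (measurable_pi_apply k).pow_const 2
    have h := strong_law_ae_real (fun i => (fun v : Fin d → ℝ => ∑ k, (v k)^2) ∘ X i)
      (by exact hsqint)
      (fun i j hij => (hindep.indepFun hij).comp hg hg)
      (fun i => (hid i).comp hg)
    rw [show ∫ ω, ((fun v : Fin d → ℝ => ∑ k, (v k)^2) ∘ X 0) ω ∂ℙ = (d:ℝ) from by
      simpa [Function.comp] using hmean_sq] at h
    simpa [Function.comp] using h
  -- combine the almost-everywhere statements
  filter_upwards [ae_all_iff.mpr fun k : Fin d => ae_all_iff.mpr fun l : Fin d => hSLLN2 k l,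
    ae_all_iff.mpr hSLLN1, hSLLN3] with ω hA hB hC
  -- rewrite the averages with `(n)⁻¹ *` instead of `/ n`
  have hmk' : ∀ k, Tendsto (fun n : ℕ => (n:ℝ)⁻¹ * ∑ j ∈ Finset.range n, X j ω k)
      atTop (nhds (0:ℝ)) := fun k => by
    simpa [div_eq_inv_mul] using hB k
  have hA' : ∀ k l, Tendsto (fun n : ℕ => (n:ℝ)⁻¹ * ∑ j ∈ Finset.range n, X j ω k * X j ω l)
      atTop (nhds (if k = l then (1:ℝ) else 0)) := fun k l => by
    simpa [div_eq_inv_mul] using hA k l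
  have hQ : Tendsto (fun n : ℕ => (n:ℝ)⁻¹ * ∑ j ∈ Finset.range n, ∑ k, (X j ω k)^2)
      atTop (nhds (d:ℝ)) := by
    simpa [div_eq_inv_mul] using hC
  -- entrywise convergence of the sample covariance matrix to the identity
  have hSkl : ∀ k l, Tendsto (fun n : ℕ => S n ω k l) atTop
      (nhds ((1 : Matrix (Fin d) (Fin d) ℝ) k l)) := by
    intro k l
    have hev : ∀ᶠ n : ℕ in atTop,
        ((n:ℝ)⁻¹ * ∑ j ∈ Finset.range n, X j ω k * X j ω l)
          - ((n:ℝ)⁻¹ * ∑ j ∈ Finset.range n, X j ω k)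
            * ((n:ℝ)⁻¹ * ∑ j ∈ Finset.range n, X j ω l) = S n ω k l := by
      filter_upwards [eventually_ge_atTop 1] with n hn
      have hn0 : (n:ℝ) ≠ 0 := Nat.cast_ne_zero.mpr (by omega)
      rw [hS n ω]
      simp only [Matrix.smul_apply, Matrix.sum_apply, Matrix.vecMulVec_apply, Pi.sub_apply,
        Pi.smul_apply, Finset.sum_apply, smul_eq_mul]
      have expand : ∑ j ∈ Finset.range n,
          ((X j ω k - (n:ℝ)⁻¹ * ∑ i ∈ Finset.range n, X i ω k)
            * (X j ω l - (n:ℝ)⁻¹ * ∑ i ∈ Finset.range n, X i ω l))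
          = (∑ j ∈ Finset.range n, X j ω k * X j ω l)
            - (n:ℝ)⁻¹ * (∑ i ∈ Finset.range n, X i ω k) * (∑ i ∈ Finset.range n, X i ω l) := by
        set a := ∑ i ∈ Finset.range n, X i ω k with ha
        set b := ∑ i ∈ Finset.range n, X i ω l with hb
        have hcongr : ∀ j ∈ Finset.range n,
            (X j ω k - (n:ℝ)⁻¹ * a) * (X j ω l - (n:ℝ)⁻¹ * b)
            = X j ω k * X j ω l - ((n:ℝ)⁻¹ * b) * X j ω k - ((n:ℝ)⁻¹ * a) * X j ω l
              + ((n:ℝ)⁻¹ * a) * ((n:ℝ)⁻¹ * b) := fun j _ => by ring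
        rw [Finset.sum_congr rfl hcongr]
        rw [Finset.sum_add_distrib, Finset.sum_sub_distrib, Finset.sum_sub_distrib,
          ← Finset.mul_sum, ← Finset.mul_sum, Finset.sum_const, Finset.card_range,
          nsmul_eq_mul, ← ha, ← hb]
        field_simp
        ring
      rw [expand]
      field_simp
    have hlim := (hA' k l).sub ((hmk' k).mul (hmk' l))
    rw [mul_zero, sub_zero] at hlim
    rw [Matrix.one_apply]
    exact Tendsto.congr' hev hlim
  -- the Frobenius distance to the identity tends to zero
  have hFten : Tendsto (fun n : ℕ => ∑ k, ∑ l,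
      (S n ω k l - (1 : Matrix (Fin d) (Fin d) ℝ) k l)^2) atTop (nhds 0) := by
    have h := tendsto_finset_sum (Finset.univ : Finset (Fin d)) fun k _ =>
      tendsto_finset_sum (Finset.univ : Finset (Fin d)) fun l _ =>
        ((hSkl k l).sub (tendsto_const_nhds
          (x := (1 : Matrix (Fin d) (Fin d) ℝ) k l))).pow 2
    simpa using h
  -- the squared norm of the sample mean tends to zero
  have hMten : Tendsto (fun n : ℕ => ∑ k,
      (((n:ℝ)⁻¹ • ∑ i ∈ Finset.range n, X i ω) k)^2) atTop (nhds 0) := by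
    have h1 : ∀ k : Fin d, Tendsto (fun n : ℕ =>
        (((n:ℝ)⁻¹ • ∑ i ∈ Finset.range n, X i ω) k)^2) atTop (nhds 0) := by
      intro k
      have heq : (fun n : ℕ => (((n:ℝ)⁻¹ • ∑ i ∈ Finset.range n, X i ω) k)^2)
          = fun n : ℕ => ((n:ℝ)⁻¹ * ∑ i ∈ Finset.range n, X i ω k)^2 := by
        funext n
        simp [Finset.sum_apply]
      rw [heq]
      simpa using (hmk' k).pow 2
    simpa using tendsto_finset_sum (Finset.univ : Finset (Fin d)) fun k _ => h1 k
  -- squeeze argument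
  apply squeeze_zero' (g := fun n : ℕ =>
    4 * (∑ k, ∑ l, (S n ω k l - (1 : Matrix (Fin d) (Fin d) ℝ) k l)^2)
      * ((n:ℝ)⁻¹ * ∑ j ∈ Finset.range n, ∑ k, (X j ω k)^2)
    + 6 * ∑ k, (((n:ℝ)⁻¹ • ∑ i ∈ Finset.range n, X i ω) k)^2)
  · filter_upwards with n
    positivity
  · filter_upwards [hFten.eventually (eventually_le_nhds (by norm_num : (0:ℝ) < 1/4)),
      eventually_ge_atTop 1] with n hF4 hn1
    have hn0 : (n:ℝ) ≠ 0 := Nat.cast_ne_zero.mpr (by omega)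
    set mv : Fin d → ℝ := (n:ℝ)⁻¹ • ∑ i ∈ Finset.range n, X i ω with hmv
    set B : Matrix (Fin d) (Fin d) ℝ := ((hpsd n ω).sqrt)⁻¹ with hBdef
    set Fn : ℝ := ∑ k, ∑ l, (S n ω k l - (1 : Matrix (Fin d) (Fin d) ℝ) k l)^2 with hFn
    have hFnn : (0:ℝ) ≤ Fn := by rw [hFn]; positivity
    have hM0 : (0:ℝ) ≤ ∑ k, (mv k)^2 := Finset.sum_nonneg fun k _ => sq_nonneg _
    have hperj : ∀ j ∈ Finset.range n,
        ∑ k, (B.mulVec (X j ω - mv) k - X j ω k)^2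
          ≤ 4 * Fn * (∑ k, (X j ω k)^2) + 6 * (∑ k, (mv k)^2) := by
      intro j _
      have hkeyX : ∑ k, (B.mulVec (X j ω) k - X j ω k)^2
          ≤ 2 * Fn * ∑ k, (X j ω k)^2 := key (hpsd n ω) hF4 (X j ω)
      have hkeym : ∑ k, (B.mulVec mv k - mv k)^2 ≤ 2 * Fn * ∑ k, (mv k)^2 :=
        key (hpsd n ω) hF4 mv
      have hBm : ∑ k, (B.mulVec mv k)^2 ≤ 3 * ∑ k, (mv k)^2 := by
        have h3 := sq_sum_sub_le (fun k => B.mulVec mv k - mv k) (fun k => - mv k)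
        simp only [sub_neg_eq_add, sub_add_cancel, neg_sq] at h3
        nlinarith
      have hsplit : ∀ k, B.mulVec (X j ω - mv) k - X j ω k
          = (B.mulVec (X j ω) k - X j ω k) - B.mulVec mv k := by
        intro k
        rw [Matrix.mulVec_sub]
        simp only [Pi.sub_apply]
        ring
      calc ∑ k, (B.mulVec (X j ω - mv) k - X j ω k)^2
          = ∑ k, ((B.mulVec (X j ω) k - X j ω k) - B.mulVec mv k)^2 :=
            Finset.sum_congr rfl fun k _ => by rw [hsplit k]
        _ ≤ 2 * ∑ k, (B.mulVec (X j ω) k - X j ω k)^2 + 2 * ∑ k, (B.mulVec mv k)^2 :=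
            sq_sum_sub_le _ _
        _ ≤ 4 * Fn * (∑ k, (X j ω k)^2) + 6 * (∑ k, (mv k)^2) := by nlinarith
    calc (n:ℝ)⁻¹ * ∑ j ∈ Finset.range n, ∑ k, (B.mulVec (X j ω - mv) k - X j ω k)^2
        ≤ (n:ℝ)⁻¹ * ∑ j ∈ Finset.range n,
            (4 * Fn * (∑ k, (X j ω k)^2) + 6 * (∑ k, (mv k)^2)) := by
          apply mul_le_mul_of_nonneg_left (Finset.sum_le_sum hperj)
          positivity
      _ = 4 * Fn * ((n:ℝ)⁻¹ * ∑ j ∈ Finset.range n, ∑ k, (X j ω k)^2)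
            + 6 * ∑ k, (mv k)^2 := by
          rw [Finset.sum_add_distrib, Finset.sum_const, Finset.card_range, ← Finset.mul_sum,
            nsmul_eq_mul]
          field_simp
  · have h := ((tendsto_const_nhds (x := (4:ℝ))).mul hFten).mul hQ |>.add
      ((tendsto_const_nhds (x := (6:ℝ))).mul hMten)
    have h0 : (4:ℝ) * 0 * (d:ℝ) + 6 * 0 = 0 := by norm_num
    exact h0 ▸ h
end
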